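/- arXiv:1811.12226 — 6 statements merged into one kernel-verified Lean document; each statement's English description precedes it below -/
import Mathlib

section
/- The group E₂(Γ₄(ℤ)) is isomorphic to E₂(ℒ), the subgroup of the unit group of M₂(ℒ) generated by the matrices E(x) for x ∈ ℒ, where ℒ is the ring of Lipschitz quaternions. -/
noncomputable section

open CliffordAlgebra

/-- The quadratic form `-(x₀² + ⋯ + x_{n-2}²)` on `ℤ^{n-1}`. -/
def Qf (n : ℕ) : QuadraticForm ℤ (Fin (n - 1) → ℤ) :=
  QuadraticMap.weightedSumSquares ℤ (fun _ : Fin (n - 1) => (-1 : ℤ))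

/-- The Clifford algebra `C_n(ℤ)`. -/
abbrev Cl (n : ℕ) := CliffordAlgebra (Qf n)

/-- The generator `i_h` of `C_n(ℤ)`. -/
def iGen (n : ℕ) (h : Fin (n - 1)) : Cl n := ι (Qf n) (Pi.single h 1)

/-- The submodule `Vⁿ(ℤ)` spanned by `1, i_1, …, i_{n-1}`. -/
def Vn (n : ℕ) : Submodule ℤ (Cl n) :=
  Submodule.span ℤ (insert 1 (Set.range (iGen n)))

/-- The elementary unit `E(x)`. -/
def Eu (n : ℕ) (x : Cl n) : (Matrix (Fin 2) (Fin 2) (Cl n))ˣ where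
  val := !![x, 1; -1, 0]
  inv := !![0, -1; 1, x]
  val_inv := by
    ext i j
    fin_cases i <;> fin_cases j <;>
      simp [Matrix.mul_apply, Fin.sum_univ_two, Matrix.one_apply]
  inv_val := by
    ext i j
    fin_cases i <;> fin_cases j <;>
      simp [Matrix.mul_apply, Fin.sum_univ_two, Matrix.one_apply]

/-- The group `E₂(Γ_n(ℤ))`. -/
def E2Gamma (n : ℕ) : Subgroup (Matrix (Fin 2) (Fin 2) (Cl n))ˣ :=
  Subgroup.closure {u | ∃ x ∈ Vn n, u = Eu n x}

lemma iGen_sq (n : ℕ) (h : Fin (n - 1)) : iGen n h * iGen n h = -1 := by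
  rw [iGen, ι_sq_scalar]
  have : Qf n (Pi.single h 1) = -1 := by
    simp [Qf, Pi.single_apply]
  rw [this]
  simp

/-- `i_h` as a unit of `C_n(ℤ)`. -/
def iUnit (n : ℕ) (h : Fin (n - 1)) : (Cl n)ˣ where
  val := iGen n h
  inv := -iGen n h
  val_inv := by rw [mul_neg, iGen_sq]; simp
  inv_val := by rw [neg_mul, iGen_sq]; simp

/-- The unit group `U_n` of `Γ_n(ℤ)`, generated by `-1` and the `i_h`. -/
def Un (n : ℕ) : Subgroup (Cl n)ˣ :=
  Subgroup.closure (insert (-1) (Set.range (iUnit n)))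

/-- The elementary unit `E(x)` over a ring `R`. -/
def Em (R : Type*) [Ring R] (x : R) : (Matrix (Fin 2) (Fin 2) R)ˣ where
  val := !![x, 1; -1, 0]
  inv := !![0, -1; 1, x]
  val_inv := by
    ext i j
    fin_cases i <;> fin_cases j <;>
      simp [Matrix.mul_apply, Fin.sum_univ_two, Matrix.one_apply]
  inv_val := by
    ext i j
    fin_cases i <;> fin_cases j <;>
      simp [Matrix.mul_apply, Fin.sum_univ_two, Matrix.one_apply]

/-- The group `E₂(R)` generated by the elementary matrices `E(x)`, `x ∈ R`. -/
def E2 (R : Type*) [Ring R] : Subgroup (Matrix (Fin 2) (Fin 2) R)ˣ :=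
  Subgroup.closure (Set.range (Em R))

/-!
Let `π : C₄(ℤ) → ℒ` be the algebra map sending `i₁, i₂, i₃` to `i, j, k`. Applied entrywise it
sends `E(x)` to `E(π x)`, and `π` maps `V⁴(ℤ)` onto `ℒ`, so it carries `E₂(Γ₄(ℤ))` onto `E₂(ℒ)`.

For injectivity, write `C₄(ℤ) = L + L e`, where `L` (spanned by `1, i₂i₃, i₃i₁, i₁i₂`) is a copy
of `ℒ` in the even part and `e = i₁i₂i₃` is central with `e² = 1`. Since `π e = -1` while the grade
involution `x ↦ x̂` negates `e` and fixes `L`, the maps `π` and `x ↦ π x̂` are jointly injective.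
On `E₂(Γ₄(ℤ))` the second is determined by the first: for `x ∈ V⁴(ℤ)` one has `π x̂ = (π x)*`,
and `M ↦ E(0) ((M*)ᵀ)⁻¹ E(0)⁻¹` is an endomorphism of `GL₂(ℒ)` sending `E(q)` to `E(q*)`.
-/

open Quaternion MulOpposite

lemma add_mul_mul_add_mul_of_commute {R : Type*} [Ring R] {e r s : R} (hr : Commute e r)
    (hs : Commute e s) (he : e * e = 1) (p q : R) :
    (p + q * e) * (r + s * e) = (p * r + q * s) + (p * s + q * r) * e := by
  have hse : e * (s * e) = s := by rw [← mul_assoc, hs.eq, mul_assoc, he, mul_one]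
  simp only [add_mul, mul_add, mul_assoc, hr.eq, hse]
  abel

section GL2

variable {R S : Type*} [Ring R] [Ring S]

def mapGL2 (f : R →+* S) : (Matrix (Fin 2) (Fin 2) R)ˣ →* (Matrix (Fin 2) (Fin 2) S)ˣ :=
  Units.map f.mapMatrix.toMonoidHom

lemma mapGL2_Em (f : R →+* S) (x : R) : mapGL2 f (Em R x) = Em S (f x) := by
  ext i j
  fin_cases i <;> fin_cases j <;> simp [mapGL2, Em]

lemma map_mapGL2_closure_Em (f : R →+* S) (V : Set R) :
    (Subgroup.closure (Em R '' V)).map (mapGL2 f) = Subgroup.closure (Em S '' (f '' V)) := by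
  rw [MonoidHom.map_closure, Set.image_image, Set.image_image]
  simp only [mapGL2_Em]

/-- `M ↦ (σ Mᵀ)⁻¹` is multiplicative because `σ` and the transpose both reverse products;
conjugating by `E(0)` makes it send `E(x)` to `E(σ x)`. -/
def transposeInvConj (σ : R →+* Rᵐᵒᵖ) :
    (Matrix (Fin 2) (Fin 2) R)ˣ →* (Matrix (Fin 2) (Fin 2) R)ˣ :=
  (MulAut.conj (Em R 0)).toMonoidHom.comp <|
    (MulEquiv.inv' _).symm.toMonoidHom.comp <|
      Units.opEquiv.toMonoidHom.comp <|
        Units.map (RingEquiv.mopMatrix.toRingHom.comp σ.mapMatrix).toMonoidHom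

lemma transposeInvConj_Em (σ : R →+* Rᵐᵒᵖ) (x : R) :
    transposeInvConj σ (Em R x) = Em R (unop (σ x)) := by
  ext i j
  fin_cases i <;> fin_cases j <;>
    simp [transposeInvConj, Em, Matrix.mul_apply, Fin.sum_univ_two, ← unop_inv, ← map_inv,
      Units.coe_unop_opEquiv, Matrix.vecMul, dotProduct]

end GL2

section Clifford

variable {n : ℕ}

lemma iGen_mul_iGen_of_ne {h k : Fin (n - 1)} (hne : h ≠ k) :
    iGen n h * iGen n k = -(iGen n k * iGen n h) := by
  refine ι_mul_ι_comm_of_isOrtho ?_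
  rw [QuadraticMap.isOrtho_def]
  simp [Qf, QuadraticMap.weightedSumSquares_apply, Pi.single_apply, Finset.sum_add_distrib,
    mul_add, hne, hne.symm]

-- Tagged `simp` so that `simp [mul_assoc]` sorts words in the generators into a normal form.
@[simp] lemma iGen_mul_iGen_of_lt {h k : Fin (n - 1)} (hkh : k < h) :
    iGen n h * iGen n k = -(iGen n k * iGen n h) :=
  iGen_mul_iGen_of_ne hkh.ne'

@[simp] lemma iGen_mul_iGen_mul_of_lt {h k : Fin (n - 1)} (hkh : k < h) (x : Cl n) :
    iGen n h * (iGen n k * x) = -(iGen n k * (iGen n h * x)) := by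
  rw [← mul_assoc, iGen_mul_iGen_of_lt hkh, neg_mul, mul_assoc]

@[simp] lemma iGen_mul_iGen_mul_self (h : Fin (n - 1)) (x : Cl n) :
    iGen n h * (iGen n h * x) = -x := by
  rw [← mul_assoc, iGen_sq, neg_one_mul]

lemma ι_eq_sum_smul_iGen (v : Fin (n - 1) → ℤ) : ι (Qf n) v = ∑ h, v h • iGen n h := by
  conv_lhs => rw [pi_eq_sum_univ' v]
  simp only [map_sum, map_zsmul, iGen]

lemma algebraMap_add_ι_mem_Vn (r : ℤ) (v : Fin (n - 1) → ℤ) :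
    algebraMap ℤ (Cl n) r + ι (Qf n) v ∈ Vn n := by
  rw [Algebra.algebraMap_eq_smul_one, ι_eq_sum_smul_iGen]
  refine add_mem (Submodule.smul_mem _ _ (Submodule.subset_span (Set.mem_insert _ _)))
    (Submodule.sum_mem _ fun h _ => Submodule.smul_mem _ _ (Submodule.subset_span ?_))
  exact Set.mem_insert_of_mem _ ⟨h, rfl⟩

lemma E2Gamma_eq_closure : E2Gamma n = Subgroup.closure (Em (Cl n) '' Vn n) := by
  rw [E2Gamma]
  congr 1
  ext u
  simp only [Set.mem_ofPred_eq, Set.mem_image, eq_comm]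
  rfl

end Clifford

namespace Cl4

attribute [local simp] iGen_sq

lemma Qf_apply (v : Fin (4 - 1) → ℤ) : Qf 4 v = -(v 0 * v 0 + v 1 * v 1 + v 2 * v 2) := by
  simp [Qf, QuadraticMap.weightedSumSquares_apply, Fin.sum_univ_three]

-- Kept separate from `pureQuaternionₗ` so that `simps` yields component lemmas: Mathlib's simp
-- lemmas for `ℍ[ℤ]` do not fire on quaternion literals `⟨a, b, c, d⟩`.
@[simps]
def pureQuaternion (v : Fin (4 - 1) → ℤ) : ℍ[ℤ] := ⟨0, v 0, v 1, v 2⟩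

def pureQuaternionₗ : (Fin (4 - 1) → ℤ) →ₗ[ℤ] ℍ[ℤ] where
  toFun := pureQuaternion
  map_add' v w := by ext <;> simp
  map_smul' c v := by ext <;> simp

lemma pureQuaternion_mul_self (v : Fin (4 - 1) → ℤ) :
    pureQuaternion v * pureQuaternion v = algebraMap ℤ ℍ[ℤ] (Qf 4 v) := by
  rw [Qf_apply]
  ext <;> simp <;> ring

def toQuaternion : Cl 4 →ₐ[ℤ] ℍ[ℤ] :=
  lift (Qf 4) ⟨pureQuaternionₗ, pureQuaternion_mul_self⟩

lemma toQuaternion_ι (v : Fin (4 - 1) → ℤ) : toQuaternion (ι (Qf 4) v) = pureQuaternion v :=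
  lift_ι_apply _ _ _

lemma toQuaternion_iGen (h : Fin (4 - 1)) :
    toQuaternion (iGen 4 h) = pureQuaternion (Pi.single h 1) :=
  toQuaternion_ι _

def pseudoscalar : Cl 4 := iGen 4 0 * iGen 4 1 * iGen 4 2

lemma pseudoscalar_mul_self : pseudoscalar * pseudoscalar = 1 := by
  simp [pseudoscalar, mul_assoc]

lemma commute_pseudoscalar_iGen (h : Fin (4 - 1)) : Commute pseudoscalar (iGen 4 h) := by
  fin_cases h <;> simp [Commute, SemiconjBy, pseudoscalar, mul_assoc]

lemma commute_pseudoscalar (x : Cl 4) : Commute pseudoscalar x := by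
  induction x using CliffordAlgebra.induction with
  | algebraMap r => exact (Algebra.commutes r _).symm
  | ι v =>
    rw [ι_eq_sum_smul_iGen]
    exact Commute.sum_right _ _ _ fun h _ => (commute_pseudoscalar_iGen h).smul_right _
  | mul x y hx hy => exact hx.mul_right hy
  | add x y hx hy => exact hx.add_right hy

lemma toQuaternion_pseudoscalar : toQuaternion pseudoscalar = -1 := by
  simp only [pseudoscalar, map_mul, toQuaternion_iGen]
  ext <;> simp

lemma involute_pseudoscalar : involute pseudoscalar = -pseudoscalar := by
  simp [pseudoscalar, iGen]

def quaternionBasis : QuaternionAlgebra.Basis (Cl 4) (-1 : ℤ) 0 (-1) where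
  i := iGen 4 1 * iGen 4 2
  j := iGen 4 2 * iGen 4 0
  k := iGen 4 0 * iGen 4 1
  i_mul_i := by simp [mul_assoc]
  j_mul_j := by simp [mul_assoc]
  i_mul_j := by simp [mul_assoc]
  j_mul_i := by simp [mul_assoc]

def ofQuaternion : ℍ[ℤ] →ₐ[ℤ] Cl 4 := QuaternionAlgebra.lift quaternionBasis

lemma ofQuaternion_apply (q : ℍ[ℤ]) :
    ofQuaternion q = algebraMap ℤ (Cl 4) q.re + q.imI • (iGen 4 1 * iGen 4 2) +
      q.imJ • (iGen 4 2 * iGen 4 0) + q.imK • (iGen 4 0 * iGen 4 1) :=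
  rfl

lemma toQuaternion_ofQuaternion (q : ℍ[ℤ]) : toQuaternion (ofQuaternion q) = q := by
  ext <;> simp [ofQuaternion_apply, toQuaternion_iGen]

lemma involute_ofQuaternion (q : ℍ[ℤ]) : involute (ofQuaternion q) = ofQuaternion q := by
  simp [ofQuaternion_apply, iGen]

lemma ι_eq_ofQuaternion_mul_pseudoscalar (v : Fin (4 - 1) → ℤ) :
    ι (Qf 4) v = ofQuaternion (-pureQuaternion v) * pseudoscalar := by
  rw [ι_eq_sum_smul_iGen, Fin.sum_univ_three]
  simp [ofQuaternion_apply, pseudoscalar, add_mul, mul_assoc]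

lemma exists_eq_ofQuaternion_add_ofQuaternion_mul_pseudoscalar (x : Cl 4) :
    ∃ a b : ℍ[ℤ], x = ofQuaternion a + ofQuaternion b * pseudoscalar := by
  induction x using CliffordAlgebra.induction with
  | algebraMap r => exact ⟨algebraMap ℤ _ r, 0, by simp⟩
  | ι v =>
    exact ⟨0, -pureQuaternion v, by rw [ι_eq_ofQuaternion_mul_pseudoscalar, map_zero, zero_add]⟩
  | add x y hx hy =>
    obtain ⟨a, b, rfl⟩ := hx
    obtain ⟨c, d, rfl⟩ := hy
    exact ⟨a + c, b + d, by simp only [map_add, add_mul]; abel⟩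
  | mul x y hx hy =>
    obtain ⟨a, b, rfl⟩ := hx
    obtain ⟨c, d, rfl⟩ := hy
    refine ⟨a * c + b * d, a * d + b * c, ?_⟩
    rw [add_mul_mul_add_mul_of_commute (commute_pseudoscalar _) (commute_pseudoscalar _)
      pseudoscalar_mul_self]
    simp only [map_add, map_mul]

lemma eq_zero_of_toQuaternion_eq_zero {x : Cl 4} (h : toQuaternion x = 0)
    (h' : toQuaternion (involute x) = 0) : x = 0 := by
  obtain ⟨a, b, rfl⟩ := exists_eq_ofQuaternion_add_ofQuaternion_mul_pseudoscalar x
  simp only [map_add, map_mul, toQuaternion_ofQuaternion, involute_ofQuaternion,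
    involute_pseudoscalar, toQuaternion_pseudoscalar, map_neg, mul_neg, mul_one, neg_neg] at h h'
  rw [Quaternion.ext_iff] at h h'
  obtain ⟨rfl, rfl⟩ : a = 0 ∧ b = 0 := by
    constructor <;> ext <;> simp at h h' ⊢ <;> omega
  simp

lemma toQuaternion_image_Vn : toQuaternion '' (Vn 4) = Set.univ := by
  refine Set.eq_univ_of_forall fun q => ⟨_, algebraMap_add_ι_mem_Vn q.re ![q.imI, q.imJ, q.imK], ?_⟩
  rw [map_add, toQuaternion_ι]
  ext <;> simp

lemma star_toQuaternion_of_mem_Vn {x : Cl 4} (hx : x ∈ Vn 4) :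
    star (toQuaternion x) = toQuaternion (involute x) := by
  induction hx using Submodule.span_induction with
  | mem y hy =>
    rcases hy with rfl | ⟨h, rfl⟩
    · simp
    · rw [iGen, involute_ι, map_neg, toQuaternion_ι]
      ext <;> simp
  | zero => simp
  | add a b _ _ ha hb => rw [map_add, map_add, map_add, star_add, ha, hb]
  | smul c a _ ha => rw [map_zsmul, map_zsmul, map_zsmul, star_zsmul, ha]

lemma map_mapGL2_toQuaternion_E2Gamma :
    (E2Gamma 4).map (mapGL2 toQuaternion.toRingHom) = E2 ℍ[ℤ] := by
  rw [E2Gamma_eq_closure, map_mapGL2_closure_Em, AlgHom.toRingHom_eq_coe, AlgHom.coe_toRingHom,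
    toQuaternion_image_Vn, Set.image_univ, E2]

lemma transposeInvConj_mapGL2_toQuaternion {u : (Matrix (Fin 2) (Fin 2) (Cl 4))ˣ}
    (hu : u ∈ E2Gamma 4) :
    transposeInvConj (starRingEquiv : ℍ[ℤ] ≃+* ℍ[ℤ]ᵐᵒᵖ).toRingHom (mapGL2 toQuaternion.toRingHom u)
      = mapGL2 (toQuaternion.comp involute).toRingHom u := by
  have hgen : Set.EqOn ((transposeInvConj (starRingEquiv : ℍ[ℤ] ≃+* ℍ[ℤ]ᵐᵒᵖ).toRingHom).comp
      (mapGL2 toQuaternion.toRingHom)) (mapGL2 (toQuaternion.comp involute).toRingHom)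
      (Em (Cl 4) '' Vn 4) := by
    rintro _ ⟨x, hx, rfl⟩
    rw [MonoidHom.comp_apply, mapGL2_Em, mapGL2_Em, transposeInvConj_Em]
    simp [star_toQuaternion_of_mem_Vn hx]
  rw [E2Gamma_eq_closure] at hu
  exact MonoidHom.eqOn_closure hgen hu

lemma eq_one_of_mapGL2_toQuaternion_eq_one {u : (Matrix (Fin 2) (Fin 2) (Cl 4))ˣ}
    (hu : u ∈ E2Gamma 4) (h : mapGL2 toQuaternion.toRingHom u = 1) : u = 1 := by
  have h' := transposeInvConj_mapGL2_toQuaternion hu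
  rw [h, map_one] at h'
  ext i j
  rw [← sub_eq_zero]
  apply eq_zero_of_toQuaternion_eq_zero
  · rw [map_sub, sub_eq_zero]
    simpa [mapGL2, Matrix.one_apply, apply_ite] using congrArg (fun v => v.val i j) h
  · rw [map_sub, map_sub, sub_eq_zero]
    simpa [mapGL2, Matrix.one_apply, apply_ite] using congrArg (fun v => v.val i j) h'.symm

end Cl4

/-- `E₂(Γ₄(ℤ))` is isomorphic to `E₂(ℒ)`, where `ℒ` is the ring of Lipschitz quaternions. -/
theorem E2Gamma_four_iso_E2_lipschitz :
    Nonempty (↥(E2Gamma 4) ≃* ↥(E2 (Quaternion ℤ))) := by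
  let f := (mapGL2 Cl4.toQuaternion.toRingHom).domRestrict (E2Gamma 4)
  have hf : Function.Injective f := (injective_iff_map_eq_one f).2 fun u hu =>
    Subtype.ext (Cl4.eq_one_of_mapGL2_toQuaternion_eq_one u.2 hu)
  have hrange : f.range = E2 ℍ[ℤ] := by
    rw [MonoidHom.domRestrict_range, Cl4.map_mapGL2_toQuaternion_E2Gamma]
  exact ⟨(MonoidHom.ofInjective hf).trans (MulEquiv.subgroupCongr hrange)⟩
end
end

section
/- The ring ℒ of Lipschitz quaternions is a GE₂-ring: the subgroup GE₂(ℒ) of the unit group of M₂(ℒ) generated by the matrices E(x) for x ∈ ℒ together with all diagonal matrices diag(μ, ν) with μ, ν ∈ ℒˣ is the whole unit group of M₂(ℒ). -/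
noncomputable section

/-- The group `GE₂(R)`, generated by `E₂(R)` together with all invertible diagonal
matrices `diag(μ, ν)` with `μ, ν ∈ Rˣ`. -/
def GE2 (R : Type*) [Ring R] : Subgroup (Matrix (Fin 2) (Fin 2) R)ˣ :=
  Subgroup.closure (Set.range (Em R) ∪
    {u : (Matrix (Fin 2) (Fin 2) R)ˣ | ∃ μ ν : Rˣ,
      u.val = !![(μ : R), 0; 0, (ν : R)]})

/-!
An invertible `2 × 2` matrix with lower-left entry `0` over a Dedekind-finite ring has unit
diagonal entries, so it is a diagonal matrix times the upper unitriangular matrix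
`E(-x) E(0)⁻¹`. Otherwise its bottom row `(c, d)` is right unimodular, and right multiplication
by `E(-q)` replaces `c` by `-d - c q`. Hence `GE₂(R)` is everything as soon as, for every right
unimodular pair `(a, b)` with `b ≠ 0`, either `b` is a unit or `N(a - b q) < N(b)` for some `q`.

The Lipschitz quaternions are not Euclidean, but rounding `b⁻¹ a` coordinatewise fails to
decrease the norm only when every coordinate of the error is `±1/2`, i.e. `2 (a - b q) = b e` with
`N(e) = 4`. Unimodularity then gives `b (e x + 2 y) = 2`, and `4 ∣ N(e x + 2 y)` forces
`N(b) = 1`.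
-/

open Quaternion

section GE2

variable {R : Type*} [Ring R]

lemma Em_mem_GE2 (x : R) : Em R x ∈ GE2 R :=
  Subgroup.subset_closure (Or.inl ⟨x, rfl⟩)

lemma mem_GE2_of_val_eq_diag {u : (Matrix (Fin 2) (Fin 2) R)ˣ} (μ ν : Rˣ)
    (h : u.val = !![(μ : R), 0; 0, (ν : R)]) : u ∈ GE2 R :=
  Subgroup.subset_closure (Or.inr ⟨μ, ν, h⟩)

lemma mem_GE2_of_mul_Em_mem {u : (Matrix (Fin 2) (Fin 2) R)ˣ} (x : R)
    (h : u * Em R x ∈ GE2 R) : u ∈ GE2 R :=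
  (Subgroup.mul_mem_cancel_right _ (Em_mem_GE2 x)).mp h

lemma val_mul_Em_one_zero (u : (Matrix (Fin 2) (Fin 2) R)ˣ) (x : R) :
    (u * Em R x).val 1 0 = u.val 1 0 * x - u.val 1 1 := by
  simp [Em, Matrix.mul_apply, Fin.sum_univ_two, sub_eq_add_neg]

lemma val_Em_neg_mul_inv_Em_zero (x : R) :
    (Em R (-x) * (Em R 0)⁻¹).val = !![1, x; 0, 1] := by
  ext i j
  fin_cases i <;> fin_cases j <;> simp [Em, Matrix.mul_apply, Fin.sum_univ_two]

lemma mem_GE2_of_val_one_zero_eq_zero [IsDedekindFiniteMonoid R]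
    {u : (Matrix (Fin 2) (Fin 2) R)ˣ} (h : u.val 1 0 = 0) : u ∈ GE2 R := by
  have hd : u.val 1 1 * u⁻¹.val 1 1 = 1 := by
    simpa [Matrix.mul_apply, Fin.sum_univ_two, h] using congr_fun₂ u.mul_inv 1 1
  have ha : u⁻¹.val 0 0 * u.val 0 0 = 1 := by
    simpa [Matrix.mul_apply, Fin.sum_univ_two, h] using congr_fun₂ u.inv_mul 0 0
  obtain ⟨α, hα⟩ : IsUnit (u.val 0 0) := IsUnit.of_mul_eq_one_right _ ha
  obtain ⟨δ, hδ⟩ : IsUnit (u.val 1 1) := IsUnit.of_mul_eq_one _ hd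
  set x := -(α⁻¹ * u.val 0 1)
  have hdiag : (u * (Em R (-x) * (Em R 0)⁻¹)).val = !![(α : R), 0; 0, (δ : R)] := by
    rw [Units.val_mul, val_Em_neg_mul_inv_Em_zero, Matrix.eta_fin_two u.val, Matrix.mul_fin_two,
      h, ← hα, ← hδ]
    simp [x, ← mul_assoc]
  exact (Subgroup.mul_mem_cancel_right _ (mul_mem (Em_mem_GE2 _) (inv_mem (Em_mem_GE2 _)))).mp
    (mem_GE2_of_val_eq_diag α δ hdiag)

theorem GE2_eq_top_of_unimodular_euclidean [IsDedekindFiniteMonoid R] (f : R → ℕ)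
    (hf : ∀ a b : R, b ≠ 0 → (∃ x y, a * x + b * y = 1) →
      (∃ q, f (a - b * q) < f b) ∨ IsUnit b) :
    GE2 R = ⊤ := by
  refine (Subgroup.eq_top_iff' _).mpr fun u => ?_
  induction hn : f (u.val 1 0) using Nat.strong_induction_on generalizing u with
  | _ n ih =>
  by_cases hc : u.val 1 0 = 0
  · exact mem_GE2_of_val_one_zero_eq_zero hc
  have hrow : -u.val 1 1 * -u⁻¹.val 1 1 + u.val 1 0 * u⁻¹.val 0 1 = 1 := by
    simpa [Matrix.mul_apply, Fin.sum_univ_two, add_comm] using congr_fun₂ u.mul_inv 1 1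
  rcases hf _ _ hc ⟨_, _, hrow⟩ with ⟨q, hq⟩ | ⟨γ, hγ⟩
  · have hq' : (u * Em R (-q)).val 1 0 = -u.val 1 1 - u.val 1 0 * q := by
      rw [val_mul_Em_one_zero]; noncomm_ring
    exact mem_GE2_of_mul_Em_mem (-q) (ih _ (hn ▸ hq' ▸ hq) _ rfl)
  · refine mem_GE2_of_mul_Em_mem (γ⁻¹ * u.val 1 1) (mem_GE2_of_val_one_zero_eq_zero ?_)
    rw [val_mul_Em_one_zero, ← hγ, ← mul_assoc, Units.mul_inv, one_mul, sub_self]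

end GE2

lemma Int.exists_abs_two_mul_sub_mul_le (p : ℤ) {n : ℤ} (hn : 0 < n) :
    ∃ q, |2 * (p - n * q)| ≤ n := by
  refine ⟨(2 * p + n) / (2 * n), abs_le.mpr ⟨?_, ?_⟩⟩ <;>
  · have := Int.mul_ediv_add_emod (2 * p + n) (2 * n)
    have := Int.emod_nonneg (2 * p + n) (by positivity : 2 * n ≠ 0)
    have := Int.emod_lt_of_pos (2 * p + n) (by positivity : 0 < 2 * n)
    linarith

namespace Quaternion

lemma normSq_pos {R : Type*} [CommRing R] [LinearOrder R] [IsStrictOrderedRing R] {a : ℍ[R]} :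
    0 < normSq a ↔ a ≠ 0 :=
  normSq_nonneg.lt_iff_ne'.trans normSq_ne_zero

lemma exists_abs_two_mul_sub_smul_le (p : ℍ[ℤ]) {n : ℤ} (hn : 0 < n) :
    ∃ q : ℍ[ℤ], |2 * (p - n • q).re| ≤ n ∧ |2 * (p - n • q).imI| ≤ n ∧
      |2 * (p - n • q).imJ| ≤ n ∧ |2 * (p - n • q).imK| ≤ n := by
  choose f hf using fun x : ℤ => Int.exists_abs_two_mul_sub_mul_le x hn
  exact ⟨⟨f p.re, f p.imI, f p.imJ, f p.imK⟩, hf _, hf _, hf _, hf _⟩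

lemma normSq_lt_or_exists_two_smul_eq (r : ℍ[ℤ]) {n : ℤ} (hn : 0 < n)
    (hr : |2 * r.re| ≤ n ∧ |2 * r.imI| ≤ n ∧ |2 * r.imJ| ≤ n ∧ |2 * r.imK| ≤ n) :
    normSq r < n ^ 2 ∨ ∃ e : ℍ[ℤ], normSq e = 4 ∧ (2 : ℤ) • r = n • e := by
  obtain ⟨h₁, h₂, h₃, h₄⟩ := hr
  have hsq : ∀ x : ℤ, |x| ≤ n → x ^ 2 ≤ n ^ 2 := fun x hx =>
    sq_le_sq' (abs_le.mp hx).1 (abs_le.mp hx).2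
  have hnormSq : 4 * normSq r =
      (2 * r.re) ^ 2 + (2 * r.imI) ^ 2 + (2 * r.imJ) ^ 2 + (2 * r.imK) ^ 2 := by
    rw [normSq_def']; ring
  have s₁ := hsq _ h₁
  have s₂ := hsq _ h₂
  have s₃ := hsq _ h₃
  have s₄ := hsq _ h₄
  rcases (show normSq r ≤ n ^ 2 by linarith).lt_or_eq with hlt | heq
  · exact .inl hlt
  have hdiv : ∀ x : ℤ, x ^ 2 = n ^ 2 → n * (x / n) = x := fun x hx =>
    Int.mul_ediv_cancel' (by rw [← abs_dvd_abs, (sq_eq_sq_iff_abs_eq_abs x n).mp hx])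
  set e : ℍ[ℤ] := ⟨2 * r.re / n, 2 * r.imI / n, 2 * r.imJ / n, 2 * r.imK / n⟩
  have he : (2 : ℤ) • r = n • e := by
    ext <;> simp only [re_smul, imI_smul, imJ_smul, imK_smul, smul_eq_mul, e] <;> symm
    exacts [hdiv _ (by linarith), hdiv _ (by linarith), hdiv _ (by linarith),
      hdiv _ (by linarith)]
  refine .inr ⟨e, ?_, he⟩
  have := congrArg normSq he
  rw [normSq_smul, normSq_smul, heq] at this
  nlinarith

lemma isUnit_of_two_smul_eq_mul {a b e x y : ℍ[ℤ]} (hab : a * x + b * y = 1)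
    (he : normSq e = 4) (h : (2 : ℤ) • a = b * e) : IsUnit b := by
  have hb : b * (e * x + (2 : ℤ) • y) = (2 : ℤ) • 1 := by
    rw [mul_add, ← mul_assoc, ← h, mul_smul_comm, smul_mul_assoc, ← smul_add, hab]
  have hnorm := congrArg normSq hb
  rw [map_mul, normSq_add, map_mul, he, normSq_smul, normSq_smul, star_smul, mul_smul_comm,
    re_smul, smul_eq_mul, map_one] at hnorm
  have hN : normSq b = 1 := Int.eq_one_of_mul_eq_one_right normSq_nonneg
    (b := normSq x + normSq y + (e * x * star y).re) (by linarith)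
  exact IsUnit.of_mul_eq_one (star b) (by rw [self_mul_star, hN, coe_one])

lemma exists_normSq_sub_mul_lt_or_isUnit (a b : ℍ[ℤ]) (hb : b ≠ 0)
    (hab : ∃ x y, a * x + b * y = 1) :
    (∃ q, normSq (a - b * q) < normSq b) ∨ IsUnit b := by
  have hn : 0 < normSq b := normSq_pos.mpr hb
  -- round `b⁻¹ a = star b * a / N(b)` coordinatewise
  obtain ⟨q, hq⟩ := exists_abs_two_mul_sub_smul_le (star b * a) hn
  have hr : star b * a - normSq b • q = star b * (a - b * q) := by
    rw [mul_sub, ← mul_assoc, star_mul_self, coe_mul_eq_smul]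
  rw [hr] at hq
  rcases normSq_lt_or_exists_two_smul_eq _ hn hq with hlt | ⟨e, he, h2⟩
  · rw [map_mul, normSq_star, sq] at hlt
    exact .inl ⟨q, lt_of_mul_lt_mul_left hlt hn.le⟩
  · obtain ⟨x, y, hxy⟩ := hab
    refine .inr (isUnit_of_two_smul_eq_mul (a := a - b * q) (x := x) (y := q * x + y) ?_ he ?_)
    · rw [← hxy]; noncomm_ring
    · apply mul_left_cancel₀ (star_ne_zero.mpr hb)
      rw [mul_smul_comm, h2, ← mul_assoc, star_mul_self, coe_mul_eq_smul]

end Quaternion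

/-- The ring `ℒ` of Lipschitz quaternions is a `GE₂`-ring: `GE₂(ℒ)` is the whole unit
group of `M₂(ℒ)`. -/
theorem GE2_lipschitz_eq_top : GE2 (Quaternion ℤ) = ⊤ :=
  GE2_eq_top_of_unimodular_euclidean (fun a => (normSq a).toNat) fun a b hb hab =>
    (exists_normSq_sub_mul_lt_or_isUnit a b hb hab).imp
      (fun ⟨q, hq⟩ => ⟨q, (Int.toNat_lt_toNat (normSq_pos.mpr hb)).mpr hq⟩) id
end
end

section
/- For every n ≥ 1, the group GE₂(Γ_n(ℤ)) is generated by the finitely many elements E(x) for x ∈ {0} ∪ 𝓑 and the diagonal matrices diag(μ, μ) and diag(μ, −μ) for μ ∈ 𝓑, where 𝓑 = {±1, ±i_1, …, ±i_{n−1}}; in particular GE₂(Γ_n(ℤ)) is a finitely generated group. -/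
noncomputable section

open CliffordAlgebra

/-- The set `𝓑 = {±1, ±i_1, …, ±i_{n-1}}` inside `C_n(ℤ)`. -/
def Bset (n : ℕ) : Set (Cl n) :=
  insert 1 (insert (-1) (Set.range (iGen n) ∪ Set.range fun h => -iGen n h))

/-- The group `GE₂(Γ_n(ℤ))`, generated by the `E(x)` for `x ∈ Vⁿ(ℤ)` together with all
diagonal matrices `diag(μ, ν)` with `μ, ν ∈ U_n` and `μ·ν* = ±1`. -/
def GE2Gamma (n : ℕ) : Subgroup (Matrix (Fin 2) (Fin 2) (Cl n))ˣ :=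
  Subgroup.closure
    ({u | ∃ x ∈ Vn n, u = Eu n x} ∪
     {u : (Matrix (Fin 2) (Fin 2) (Cl n))ˣ | ∃ μ ν : (Cl n)ˣ, μ ∈ Un n ∧ ν ∈ Un n ∧
       ((μ : Cl n) * reverse ((ν : Cl n)) = 1 ∨ (μ : Cl n) * reverse ((ν : Cl n)) = -1) ∧
       u.val = !![(μ : Cl n), 0; 0, (ν : Cl n)]})

/-
`E(x + y) = E(x) E(0)⁻¹ E(y)`, so `x ↦ E(x)` is a homomorphism up to the fixed factor `E(0)⁻¹`,
and `E(Vⁿ(ℤ))` is generated by `E(0)`, `E(1)` and the `E(i_h)`. If `μ ν* = ±1` then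
`diag(μ, ν) = diag(μ, (μ*)⁻¹) · diag(1, ±1)`, and `μ ↦ diag(μ, (μ*)⁻¹)` is a homomorphism on units,
so these diagonal matrices are generated by its values on the generators of `U_n`, namely
`diag(-1, -1)` and `diag(i_h, -i_h)`.
-/

theorem map_mem_of_mem_addSubgroupClosure {A G : Type*} [AddGroup A] [Group G] {f : A → G}
    (hf : ∀ x y, f (x + y) = f x * (f 0)⁻¹ * f y) {H : Subgroup G} {s : Set A}
    (h0 : f 0 ∈ H) (hs : ∀ x ∈ s, f x ∈ H) {x : A} (hx : x ∈ AddSubgroup.closure s) :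
    f x ∈ H := by
  induction hx using AddSubgroup.closure_induction with
  | mem x hx => exact hs x hx
  | zero => exact h0
  | add x y _ _ hx hy => rw [hf]; exact mul_mem (mul_mem hx (inv_mem h0)) hy
  | neg x _ hx =>
    have h := hf x (-x)
    rw [add_neg_cancel] at h
    rw [eq_inv_mul_of_mul_eq h.symm]
    exact mul_mem (inv_mem (mul_mem hx (inv_mem h0))) h0

section Diagonal

variable (R : Type*) [Ring R]

def diagUnits : Rˣ × Rˣ →* (Matrix (Fin 2) (Fin 2) R)ˣ where
  toFun p := ⟨!![(p.1 : R), 0; 0, p.2], !![((p.1⁻¹ : Rˣ) : R), 0; 0, ((p.2⁻¹ : Rˣ) : R)],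
    by simp [Matrix.one_fin_two], by simp [Matrix.one_fin_two]⟩
  map_one' := by ext1; simp [Matrix.one_fin_two]
  map_mul' p q := by ext1; simp

variable {R}

@[simp]
theorem diagUnits_val (p : Rˣ × Rˣ) : (diagUnits R p : Matrix (Fin 2) (Fin 2) R) =
    !![(p.1 : R), 0; 0, p.2] := rfl

end Diagonal

section Reverse

variable {R M : Type*} [CommRing R] [AddCommGroup M] [Module R M] (Q : QuadraticForm R M)

def reverseInvUnits : (CliffordAlgebra Q)ˣ →* (CliffordAlgebra Q)ˣ where
  toFun μ := ⟨reverse (μ⁻¹ : (CliffordAlgebra Q)ˣ).val, reverse μ.val,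
    by rw [← reverse.map_mul, Units.mul_inv, reverse.map_one],
    by rw [← reverse.map_mul, Units.inv_mul, reverse.map_one]⟩
  map_one' := by ext1; simp
  map_mul' μ ν := by ext1; simp [reverse.map_mul]

variable {Q}

@[simp]
theorem reverseInvUnits_val (μ : (CliffordAlgebra Q)ˣ) :
    (reverseInvUnits Q μ : CliffordAlgebra Q) = reverse (μ⁻¹ : (CliffordAlgebra Q)ˣ).val :=
  rfl

theorem eq_reverseInvUnits_of_mul_reverse_eq_one {μ ν : (CliffordAlgebra Q)ˣ}
    (h : μ.val * reverse ν.val = 1) : ν = reverseInvUnits Q μ := by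
  have hν : reverse ν.val = (μ⁻¹ : (CliffordAlgebra Q)ˣ).val * 1 :=
    (Units.eq_inv_mul_iff_mul_eq μ).2 h
  ext1
  rw [reverseInvUnits_val, ← mul_one (μ⁻¹ : (CliffordAlgebra Q)ˣ).val, ← hν, reverse_reverse]

end Reverse

def GE2GammaGens (n : ℕ) : Set (Matrix (Fin 2) (Fin 2) (Cl n))ˣ :=
  {u | ∃ x ∈ insert (0 : Cl n) (Bset n), u = Eu n x} ∪
    {u | ∃ μ ∈ Bset n, u.val = !![μ, 0; 0, μ] ∨ u.val = !![μ, 0; 0, -μ]}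

section GE2Gamma

variable (n : ℕ)

theorem Eu_add (x y : Cl n) : Eu n (x + y) = Eu n x * (Eu n 0)⁻¹ * Eu n y := by
  ext1
  simp [Eu, add_comm]

theorem reverse_iGen (h : Fin (n - 1)) : reverse (iGen n h) = iGen n h := reverse_ι _

theorem neg_one_mem_Un : -1 ∈ Un n := Subgroup.subset_closure (Set.mem_insert _ _)

theorem neg_mem_Un {m : (Cl n)ˣ} (hm : m ∈ Un n) : -m ∈ Un n := by
  simpa using mul_mem (neg_one_mem_Un n) hm

theorem iUnit_mem_Un (h : Fin (n - 1)) : iUnit n h ∈ Un n :=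
  Subgroup.subset_closure (Set.mem_insert_of_mem _ ⟨h, rfl⟩)

theorem Bset_finite : (Bset n).Finite :=
  (((Set.finite_range _).union (Set.finite_range _)).insert _).insert _

theorem GE2GammaGens_finite : (GE2GammaGens n).Finite := by
  refine ((((Bset_finite n).insert 0).image (Eu n)).subset ?_).union
    ((Set.Finite.preimage Units.val_injective.injOn
      (((Bset_finite n).image fun μ => !![μ, 0; 0, μ]).union
        ((Bset_finite n).image fun μ => !![μ, 0; 0, -μ]))).subset ?_)
  · rintro u ⟨x, hx, rfl⟩
    exact ⟨x, hx, rfl⟩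
  · rintro u ⟨μ, hμ, h | h⟩
    exacts [Or.inl ⟨μ, hμ, h.symm⟩, Or.inr ⟨μ, hμ, h.symm⟩]

theorem Eu_mem_closure_GE2GammaGens {x : Cl n} (hx : x ∈ Vn n) :
    Eu n x ∈ Subgroup.closure (GE2GammaGens n) := by
  rw [← Submodule.mem_toAddSubgroup, Vn, Submodule.span_int_eq_addSubgroupClosure] at hx
  refine map_mem_of_mem_addSubgroupClosure (Eu_add n)
    (Subgroup.subset_closure (Or.inl ⟨0, Set.mem_insert _ _, rfl⟩)) ?_ hx
  rintro x (rfl | ⟨h, rfl⟩)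
  · exact Subgroup.subset_closure (Or.inl ⟨1, by simp [Bset], rfl⟩)
  · exact Subgroup.subset_closure (Or.inl ⟨iGen n h, by simp [Bset], rfl⟩)

theorem diagUnits_reverseInvUnits_mem_closure_GE2GammaGens {μ : (Cl n)ˣ} (hμ : μ ∈ Un n) :
    diagUnits (Cl n) (μ, reverseInvUnits (Qf n) μ) ∈ Subgroup.closure (GE2GammaGens n) := by
  let ψ := (diagUnits (Cl n)).comp ((MonoidHom.id _).prod (reverseInvUnits (Qf n)))
  suffices Un n ≤ (Subgroup.closure (GE2GammaGens n)).comap ψ from this hμ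
  rw [Un, Subgroup.closure_le]
  rintro μ (rfl | ⟨h, rfl⟩)
  · refine Subgroup.subset_closure (Or.inr ⟨-1, by simp [Bset], Or.inl ?_⟩)
    simp [ψ]
  · refine Subgroup.subset_closure (Or.inr ⟨iGen n h, by simp [Bset], Or.inr ?_⟩)
    simp [ψ, iUnit, reverse_iGen]

theorem GE2Gamma_le_closure_GE2GammaGens : GE2Gamma n ≤ Subgroup.closure (GE2GammaGens n) := by
  rw [GE2Gamma, Subgroup.closure_le]
  rintro u (⟨x, hx, rfl⟩ | ⟨μ, ν, hμ, -, hμν, hu⟩)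
  · exact Eu_mem_closure_GE2GammaGens n hx
  have hψ := diagUnits_reverseInvUnits_mem_closure_GE2GammaGens n hμ
  rcases hμν with hμν | hμν
  · obtain rfl := eq_reverseInvUnits_of_mul_reverse_eq_one hμν
    rwa [show u = diagUnits (Cl n) (μ, reverseInvUnits (Qf n) μ) from Units.ext hu]
  · have hν : -ν = reverseInvUnits (Qf n) μ :=
      eq_reverseInvUnits_of_mul_reverse_eq_one <| by
        rw [Units.val_neg, map_neg, mul_neg, hμν, neg_neg]
    have hdiag :
        u = diagUnits (Cl n) (μ, reverseInvUnits (Qf n) μ) * diagUnits (Cl n) (1, -1) := by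
      ext1
      simp [hu, ← hν]
    rw [hdiag]
    exact mul_mem hψ (Subgroup.subset_closure (Or.inr ⟨1, by simp [Bset], Or.inr (by simp)⟩))

theorem insert_zero_Bset_subset_Vn : insert 0 (Bset n) ⊆ Vn n := by
  have h1 : (1 : Cl n) ∈ Vn n := Submodule.subset_span (Set.mem_insert _ _)
  have hi (h : Fin (n - 1)) : iGen n h ∈ Vn n :=
    Submodule.subset_span (Set.mem_insert_of_mem _ ⟨h, rfl⟩)
  rintro x (rfl | rfl | rfl | ⟨h, rfl⟩ | ⟨h, rfl⟩)
  exacts [zero_mem _, h1, neg_mem h1, hi h, neg_mem (hi h)]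

theorem exists_mem_Un_of_mem_Bset {μ : Cl n} (hμ : μ ∈ Bset n) :
    ∃ m ∈ Un n, m.val = μ ∧ (μ * reverse μ = 1 ∨ μ * reverse μ = -1) := by
  rcases hμ with rfl | rfl | ⟨h, rfl⟩ | ⟨h, rfl⟩
  · exact ⟨1, one_mem _, rfl, by simp⟩
  · exact ⟨-1, neg_one_mem_Un n, rfl, by simp⟩
  · exact ⟨iUnit n h, iUnit_mem_Un n h, rfl, by simp [reverse_iGen, iGen_sq]⟩
  · refine ⟨-iUnit n h, neg_mem_Un n (iUnit_mem_Un n h), rfl, by simp [reverse_iGen, iGen_sq]⟩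

theorem closure_GE2GammaGens_le_GE2Gamma : Subgroup.closure (GE2GammaGens n) ≤ GE2Gamma n := by
  rw [Subgroup.closure_le]
  rintro u (⟨x, hx, rfl⟩ | ⟨μ, hμ, hu⟩)
  · exact Subgroup.subset_closure (Or.inl ⟨x, insert_zero_Bset_subset_Vn n hx, rfl⟩)
  obtain ⟨m, hm, rfl, hsq⟩ := exists_mem_Un_of_mem_Bset n hμ
  refine Subgroup.subset_closure (Or.inr ?_)
  rcases hu with hu | hu
  · exact ⟨m, m, hm, hm, hsq, hu⟩
  · refine ⟨m, -m, hm, neg_mem_Un n hm, ?_, by simpa using hu⟩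
    simp only [Units.val_neg, map_neg, mul_neg, neg_eq_iff_eq_neg, neg_neg]
    exact hsq.symm

end GE2Gamma

theorem GE2Gamma_finitely_generated_general (n : ℕ) :
    GE2Gamma n = Subgroup.closure
      ({u | ∃ x ∈ insert (0 : Cl n) (Bset n), u = Eu n x} ∪
       {u : (Matrix (Fin 2) (Fin 2) (Cl n))ˣ | ∃ μ ∈ Bset n,
         u.val = !![μ, 0; 0, μ] ∨ u.val = !![μ, 0; 0, -μ]}) ∧
    Group.FG ↥(GE2Gamma n) := by
  have hGE : GE2Gamma n = Subgroup.closure (GE2GammaGens n) :=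
    (GE2Gamma_le_closure_GE2GammaGens n).antisymm (closure_GE2GammaGens_le_GE2Gamma n)
  refine ⟨hGE, ?_⟩
  have := (GE2GammaGens_finite n).to_subtype
  rw [hGE]
  infer_instance

/-- For every `n ≥ 1`, the group `GE₂(Γ_n(ℤ))` is generated by the finitely many elements
`E(x)` for `x ∈ {0} ∪ 𝓑` and the diagonal matrices `diag(μ, μ)`, `diag(μ, -μ)` for `μ ∈ 𝓑`;
in particular it is finitely generated. -/
theorem GE2Gamma_finitely_generated (n : ℕ) (hn : 1 ≤ n) :
    GE2Gamma n = Subgroup.closure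
      ({u | ∃ x ∈ insert (0 : Cl n) (Bset n), u = Eu n x} ∪
       {u : (Matrix (Fin 2) (Fin 2) (Cl n))ˣ | ∃ μ ∈ Bset n,
         u.val = !![μ, 0; 0, μ] ∨ u.val = !![μ, 0; 0, -μ]}) ∧
    Group.FG ↥(GE2Gamma n) :=
  GE2Gamma_finitely_generated_general n
end
end

section
/- For every n ≥ 1, the group DE₂(Γ_n(ℤ)) is isomorphic to U_n, the unit group of Γ_n(ℤ); an isomorphism is given by the map sending a unit a ∈ U_n to the diagonal matrix diag(a, (a*)⁻¹). -/
noncomputable section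

open CliffordAlgebra

/-- Reversal `a ↦ a*` as a map on units of `C_n(ℤ)`. -/
def revUnit (n : ℕ) (a : (Cl n)ˣ) : (Cl n)ˣ where
  val := reverse (a : Cl n)
  inv := reverse ((a⁻¹ : (Cl n)ˣ) : Cl n)
  val_inv := by rw [← reverse.map_mul, Units.inv_mul, reverse.map_one]
  inv_val := by rw [← reverse.map_mul, Units.mul_inv, reverse.map_one]

/-- The diagonal unit `diag(μ, μ⁻¹)` of `M₂(C_n(ℤ))`. -/
def Du (n : ℕ) (μ : (Cl n)ˣ) : (Matrix (Fin 2) (Fin 2) (Cl n))ˣ where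
  val := !![(μ : Cl n), 0; 0, ((μ⁻¹ : (Cl n)ˣ) : Cl n)]
  inv := !![((μ⁻¹ : (Cl n)ˣ) : Cl n), 0; 0, (μ : Cl n)]
  val_inv := by
    ext i j
    fin_cases i <;> fin_cases j <;>
      simp [Matrix.mul_apply, Fin.sum_univ_two, Matrix.one_apply]
  inv_val := by
    ext i j
    fin_cases i <;> fin_cases j <;>
      simp [Matrix.mul_apply, Fin.sum_univ_two, Matrix.one_apply]

/-- The set `{±1, ±i_1, …, ±i_{n-1}}` as units of `C_n(ℤ)`. -/
def Bunits (n : ℕ) : Set (Cl n)ˣ :=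
  insert 1 (insert (-1) (Set.range (iUnit n) ∪ Set.range fun h => -iUnit n h))

/-- The group `DE₂(Γ_n(ℤ))`, generated by the diagonal matrices `diag(μ, μ⁻¹)` for
`μ ∈ {±1, ±i_1, …, ±i_{n-1}}`. -/
def DE2Gamma (n : ℕ) : Subgroup (Matrix (Fin 2) (Fin 2) (Cl n))ˣ :=
  Subgroup.closure (Du n '' Bunits n)

lemma revUnit_mul (n : ℕ) (a b : (Cl n)ˣ) :
    revUnit n (a * b) = revUnit n b * revUnit n a := by
  ext
  simp [revUnit, reverse.map_mul]

/-- The diagonal unit `diag(a, (a*)⁻¹)`. -/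
def PhiU (n : ℕ) (a : (Cl n)ˣ) : (Matrix (Fin 2) (Fin 2) (Cl n))ˣ where
  val := !![(a : Cl n), 0; 0, (((revUnit n a)⁻¹ : (Cl n)ˣ) : Cl n)]
  inv := !![((a⁻¹ : (Cl n)ˣ) : Cl n), 0; 0, ((revUnit n a : (Cl n)ˣ) : Cl n)]
  val_inv := by
    ext i j
    fin_cases i <;> fin_cases j <;>
      simp [Matrix.mul_apply, Fin.sum_univ_two, Matrix.one_apply]
  inv_val := by
    ext i j
    fin_cases i <;> fin_cases j <;>
      simp [Matrix.mul_apply, Fin.sum_univ_two, Matrix.one_apply]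

/-- `PhiU` as a monoid hom. -/
def PhiHom (n : ℕ) : (Cl n)ˣ →* (Matrix (Fin 2) (Fin 2) (Cl n))ˣ where
  toFun := PhiU n
  map_one' := by
    ext i j
    fin_cases i <;> fin_cases j <;>
      simp [PhiU, revUnit, Matrix.one_apply]
  map_mul' a b := by
    ext i j
    have h : (revUnit n (a * b))⁻¹ = (revUnit n a)⁻¹ * (revUnit n b)⁻¹ := by
      rw [revUnit_mul, mul_inv_rev]
    fin_cases i <;> fin_cases j <;>
      simp [PhiU, h, Matrix.mul_apply, Fin.sum_univ_two]

lemma PhiHom_injective (n : ℕ) : Function.Injective (PhiHom n) := by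
  intro a b hab
  ext
  have h1 := congrArg Units.val hab
  have h2 := congrArg (fun m : Matrix (Fin 2) (Fin 2) (Cl n) => m 0 0) h1
  simpa [PhiHom, PhiU] using h2

lemma PhiU_eq_Du (n : ℕ) (a : (Cl n)ˣ) (h : reverse (a : Cl n) = (a : Cl n)) :
    PhiU n a = Du n a := by
  have hrev : revUnit n a = a := by ext; simp [revUnit, h]
  ext i j
  fin_cases i <;> fin_cases j <;> simp [PhiU, Du, hrev]

lemma rev_neg_one (n : ℕ) : reverse (((-1 : (Cl n)ˣ) : Cl n)) = ((-1 : (Cl n)ˣ) : Cl n) := by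
  simp

lemma rev_iUnit (n : ℕ) (h : Fin (n - 1)) :
    reverse ((iUnit n h : (Cl n)ˣ) : Cl n) = ((iUnit n h : (Cl n)ˣ) : Cl n) := by
  simp [iUnit, iGen, reverse_ι]

lemma map_Un_eq (n : ℕ) : (Un n).map (PhiHom n) = DE2Gamma n := by
  apply le_antisymm
  · rw [Un, MonoidHom.map_closure]
    refine Subgroup.closure_le _ |>.2 ?_
    rintro x ⟨μ, hμ, rfl⟩
    apply Subgroup.subset_closure
    rcases hμ with rfl | ⟨h, rfl⟩
    · exact ⟨-1, Or.inr (Or.inl rfl),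
        (PhiU_eq_Du n _ (rev_neg_one n)).symm⟩
    · exact ⟨iUnit n h, Or.inr (Or.inr (Or.inl ⟨h, rfl⟩)),
        (PhiU_eq_Du n _ (rev_iUnit n h)).symm⟩
  · refine Subgroup.closure_le _ |>.2 ?_
    rintro x ⟨μ, hμ, rfl⟩
    rcases hμ with rfl | rfl | ⟨h, rfl⟩ | ⟨h, rfl⟩
    · exact ⟨1, Subgroup.one_mem _, (PhiU_eq_Du n 1 (by simp))⟩
    · exact ⟨-1, Subgroup.subset_closure (Or.inl rfl),
        PhiU_eq_Du n _ (rev_neg_one n)⟩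
    · exact ⟨iUnit n h, Subgroup.subset_closure (Or.inr ⟨h, rfl⟩),
        PhiU_eq_Du n _ (rev_iUnit n h)⟩
    · refine ⟨-iUnit n h, ?_, PhiU_eq_Du n _ (by simp [iUnit, iGen, reverse_ι])⟩
      have : -iUnit n h = (-1) * iUnit n h := by rw [neg_one_mul]
      rw [this]
      exact Subgroup.mul_mem _ (Subgroup.subset_closure (Or.inl rfl))
        (Subgroup.subset_closure (Or.inr ⟨h, rfl⟩))

/-- For every `n ≥ 1`, `DE₂(Γ_n(ℤ))` is isomorphic to `U_n`, the unit group of `Γ_n(ℤ)`,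
via the map sending a unit `a` to the diagonal matrix `diag(a, (a*)⁻¹)`. -/
theorem DE2Gamma_iso_Un (n : ℕ) (hn : 1 ≤ n) :
    ∃ e : ↥(Un n) ≃* ↥(DE2Gamma n),
      ∀ a : ↥(Un n),
        (e a).val.val =
          !![a.val.val, 0; 0, ((revUnit n a.val)⁻¹).val] := by
  refine ⟨(Subgroup.equivMapOfInjective (Un n) (PhiHom n) (PhiHom_injective n)).trans
    (MulEquiv.subgroupCongr (map_Un_eq n)), fun a => rfl⟩
end
end

section
/- Let d ≥ 4 be an integer and let 𝒪 = ℤ[√−d] (in Lean: Zsqrtd (−d)). Then E₂(𝒪) is isomorphic to the amalgamated free product E₂(ℤ) ∗_{B₂'(ℤ)} B₂'(𝒪), where the two maps from B₂'(ℤ) are the natural inclusions (the one into B₂'(𝒪) induced by the coefficient ring embedding ℤ → 𝒪); moreover this amalgamated product is nontrivial, i.e. both inclusions are injective and neither is surjective. -/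
universe u v w

/-- A two-element family of types indexed by `Bool`. -/
def boolFam (A B : Type u) : Bool → Type u := fun b => match b with
  | true => A
  | false => B

instance boolFamGroup {A B : Type u} [Group A] [Group B] : ∀ b, Group (boolFam A B b)
  | true => inferInstanceAs (Group A)
  | false => inferInstanceAs (Group B)

/-- The pair of maps `f : C →* A`, `g : C →* B` as a `Bool`-indexed family. -/
def boolHoms {A B C : Type u} [Group A] [Group B] [Group C] (f : C →* A) (g : C →* B) :
    (b : Bool) → C →* boolFam A B b
  | true => f
  | false => g

/-- A group `Γ` is a nontrivial free product with amalgamation if it is isomorphic to the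
pushout (amalgamated free product) `A ∗_C B` of two injective, non-surjective group
homomorphisms `f : C → A` and `g : C → B`. -/
def IsNontrivialAmalgam (Γ : Type v) [Group Γ] : Prop :=
  ∃ (A B C : Type v) (_ : Group A) (_ : Group B) (_ : Group C)
    (f : C →* A) (g : C →* B),
      Function.Injective f ∧ Function.Injective g ∧
      ¬ Function.Surjective f ∧ ¬ Function.Surjective g ∧
      Nonempty (Γ ≃* Monoid.PushoutI (boolHoms f g))

noncomputable section

def B2set (R : Type*) [Ring R] : Set (Matrix (Fin 2) (Fin 2) R)ˣ :=
  {u | u.val 1 0 = 0 ∧ (u⁻¹).val 1 0 = 0}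

lemma one_mem_B2set (R : Type*) [Ring R] : (1 : (Matrix (Fin 2) (Fin 2) R)ˣ) ∈ B2set R :=
  ⟨by simp [Matrix.one_apply], by simp [Matrix.one_apply]⟩

lemma mul_mem_B2set (R : Type*) [Ring R] {u v : (Matrix (Fin 2) (Fin 2) R)ˣ}
    (hu : u ∈ B2set R) (hv : v ∈ B2set R) : u * v ∈ B2set R := by
  obtain ⟨hu1, hu2⟩ := hu
  obtain ⟨hv1, hv2⟩ := hv
  constructor
  · show ((u * v).val) 1 0 = 0
    rw [Units.val_mul]
    rw [Matrix.mul_apply, Fin.sum_univ_two, hu1, hv1, zero_mul, mul_zero, add_zero]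
  · show (((u * v)⁻¹).val) 1 0 = 0
    rw [mul_inv_rev, Units.val_mul]
    rw [Matrix.mul_apply, Fin.sum_univ_two, hu2, hv2, zero_mul, mul_zero, add_zero]

lemma inv_mem_B2set (R : Type*) [Ring R] {u : (Matrix (Fin 2) (Fin 2) R)ˣ}
    (hu : u ∈ B2set R) : u⁻¹ ∈ B2set R := by
  obtain ⟨hu1, hu2⟩ := hu
  exact ⟨hu2, by simpa using hu1⟩

/-- The Borel subgroup `B₂(R)` of upper-triangular matrices in the unit group of `M₂(R)`. -/
def B2 (R : Type*) [Ring R] : Subgroup (Matrix (Fin 2) (Fin 2) R)ˣ where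
  carrier := B2set R
  one_mem' := one_mem_B2set R
  mul_mem' := fun hu hv => mul_mem_B2set R hu hv
  inv_mem' := fun hu => inv_mem_B2set R hu

/-- `B₂'(R) = E₂(R) ∩ B₂(R)`. -/
def B2' (R : Type*) [Ring R] : Subgroup (Matrix (Fin 2) (Fin 2) R)ˣ :=
  E2 R ⊓ B2 R

/-- The natural inclusion `B₂'(ℤ) → E₂(ℤ)`. -/
def inclB2' : ↥(B2' ℤ) →* ↥(E2 ℤ) :=
  Subgroup.inclusion inf_le_left

/-!
The inclusions of `E₂(ℤ)` and `B₂'(𝒪)` into `E₂(𝒪)` induce a map from the amalgam, which is onto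
because `E(x) = [[1, -x], [0, 1]] · E(0)` with the first factor in `B₂'(𝒪)` and `E(0) ∈ E₂(ℤ)`.

For injectivity, embed `𝒪` into `ℂ` by `√-d ↦ i√d` and let `GL₂(ℂ)` act on `ℂ ∪ {∞}` by Möbius
transformations. The units of `ℤ` and of `𝒪` are `±1`, so elements of `B₂'(ℤ)` act as real
translations and elements of `B₂'(𝒪) \ B₂'(ℤ)` as translations by some `s` with
`|Im s| ≥ √d ≥ 2`; these map the strip `|Im z| < 1` into `|Im z| > 1`. An element of
`E₂(ℤ) \ B₂'(ℤ)` is an integer matrix with `c ≠ 0`, and `Im(g z) = Im z / |c z + d|²` shows that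
it maps `|Im z| > 1` into the strip. By ping-pong, a reduced word never acts as a real
translation: after moving a `B₂'(𝒪)`-letter at one end into the translation, a word that begins
and ends in `E₂(ℤ)` maps `|Im z| > 1` into the strip, which no translation does, and a word that
begins and ends in `B₂'(𝒪)` maps the strip into `|Im z| > 1`, which no real translation does.
-/

open Set Matrix

namespace Monoid.PushoutI

variable {ι : Type*} {G : ι → Type*} {H : Type*} [∀ i, Group (G i)] [Group H]
  {φ : ∀ i, H →* G i}

theorem exists_reduced_eq_base_mul (hφ : ∀ i, Function.Injective (φ i)) (x : PushoutI φ) :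
    ∃ (h : H) (w : CoprodI.Word G), Reduced φ w ∧ base φ h * ofCoprodI w.prod = x := by
  classical
  obtain ⟨d⟩ := NormalWord.transversal_nonempty φ hφ
  let w : NormalWord d := NormalWord.equiv x
  refine ⟨w.head, w.toWord, fun l hl hr => w.toWord.ne_one l hl ?_,
    NormalWord.equiv.symm_apply_apply x⟩
  have hcompl := d.compl l.1
  exact (congrArg Subtype.val
    (hcompl.equiv_snd_eq_self_of_mem_of_one_mem (one_mem _) (w.normalized l.1 l.2 hl))).symm.trans
    (congrArg Subtype.val (hcompl.equiv_snd_eq_one_of_mem_of_one_mem (d.one_mem l.1) hr))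

end Monoid.PushoutI

theorem mapsTo_list_prod_smul {ι M X : Type*} [Monoid M] [MulAction M X] (S : ι → Set X)
    (L : List (ι × M)) (hL : ∀ p ∈ L, ∀ i ≠ p.1, MapsTo (p.2 • ·) (S i) (S p.1)) (j : ι)
    (hchain : (L.map Prod.fst ++ [j]).IsChain (· ≠ ·)) :
    MapsTo ((L.map Prod.snd).prod • ·) (S j) (S ((L.map Prod.fst).headD j)) := by
  induction L with
  | nil => exact fun x hx => by simpa using hx
  | cons p L ih =>
    have hne : (L.map Prod.fst).headD j ≠ p.1 := by
      cases L <;> simp_all [List.isChain_cons_cons, eq_comm]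
    have hmaps := (hL p (by simp) _ hne).comp
      (ih (fun q hq => hL q (by simp [hq])) (List.IsChain.tail hchain))
    simpa [mul_smul, Function.comp_def] using hmaps

section Moebius

variable {K : Type*} [Field K] [DecidableEq K]

def IsTranslation (g : GL (Fin 2) K) (s : K) : Prop :=
  ∀ z : K, g • (z : OnePoint K) = ↑(z + s)

lemma IsTranslation.mul {g h : GL (Fin 2) K} {s t : K} (hg : IsTranslation g s)
    (hh : IsTranslation h t) : IsTranslation (g * h) (t + s) := fun z => by
  rw [mul_smul, hh, hg, add_assoc]

lemma IsTranslation.inv {g : GL (Fin 2) K} {s : K} (hg : IsTranslation g s) :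
    IsTranslation g⁻¹ (-s) := fun z => by
  rw [inv_smul_eq_iff, hg, neg_add_cancel_right]

lemma isTranslation_of_upperTriangular {g : GL (Fin 2) K} (h10 : g 1 0 = 0)
    (hdiag : g 0 0 = g 1 1) : IsTranslation g (g 0 1 / g 1 1) := by
  intro z
  have h11 : g 1 1 ≠ 0 := fun h => g.det_ne_zero (by simp [det_fin_two, h10, h])
  rw [OnePoint.smul_some_eq_ite, if_neg (by simpa [h10] using h11), h10, hdiag, zero_mul, zero_add,
    add_div, mul_div_cancel_left₀ _ h11]

end Moebius

/-- The ping-pong sets, indexed like the factors of the amalgam: letters from `E₂(ℤ)` (index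
`true`) land in the strip `|Im z| < 1`, letters from `B₂'(𝒪)` (index `false`) in `|Im z| > 1`. -/
def imRegion : Bool → Set (OnePoint ℂ)
  | true => (↑) '' {z : ℂ | |z.im| < 1}
  | false => (↑) '' {z : ℂ | 1 < |z.im|}

lemma coe_mem_imRegion_true {z : ℂ} : (z : OnePoint ℂ) ∈ imRegion true ↔ |z.im| < 1 :=
  OnePoint.coe_injective.mem_set_image

lemma coe_mem_imRegion_false {z : ℂ} : (z : OnePoint ℂ) ∈ imRegion false ↔ 1 < |z.im| :=
  OnePoint.coe_injective.mem_set_image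

namespace IsTranslation

variable {g : GL (Fin 2) ℂ} {s : ℂ}

lemma mapsTo_imRegion (hg : IsTranslation g s) (hs : 2 ≤ |s.im|) :
    MapsTo (g • ·) (imRegion true) (imRegion false) := by
  rintro _ ⟨z, hz : |z.im| < 1, rfl⟩
  dsimp only
  rw [hg, coe_mem_imRegion_false, Complex.add_im]
  have h : |s.im| ≤ |z.im + s.im| + |z.im| := by simpa using abs_add_le (z.im + s.im) (-z.im)
  linarith

lemma not_mapsTo_imRegion_false (hg : IsTranslation g s) :
    ¬ MapsTo (g • ·) (imRegion false) (imRegion true) := by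
  intro h
  have hz : (((|s.im| + 2 : ℝ) : ℂ) * Complex.I).im = |s.im| + 2 := by simp
  have hmem := h (coe_mem_imRegion_false.2 <| by
    rw [hz, abs_of_pos (by positivity)]
    linarith [abs_nonneg s.im])
  dsimp only at hmem
  rw [hg, coe_mem_imRegion_true, Complex.add_im, hz] at hmem
  linarith [(abs_lt.1 hmem).2, neg_abs_le s.im]

lemma not_mapsTo_imRegion_true (hg : IsTranslation g s) (hs : s.im = 0) :
    ¬ MapsTo (g • ·) (imRegion true) (imRegion false) := by
  intro h
  have hmem := h (coe_mem_imRegion_true.2 (by simp : |(0 : ℂ).im| < 1))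
  dsimp only at hmem
  rw [hg, coe_mem_imRegion_false] at hmem
  norm_num [hs] at hmem

end IsTranslation

lemma mapsTo_imRegion_of_int (m : GL (Fin 2) ℤ) (hdet : m.val.det = 1) (hc : m 1 0 ≠ 0) :
    MapsTo (GeneralLinearGroup.map (Int.castRingHom ℂ) m • ·) (imRegion false)
      (imRegion true) := by
  rintro _ ⟨z, hz : 1 < |z.im|, rfl⟩
  have hc' : (1 : ℝ) ≤ (m 1 0 : ℝ) ^ 2 := by
    have := Int.one_le_abs hc
    nlinarith [sq_abs (m 1 0 : ℝ), (by exact_mod_cast this : (1 : ℝ) ≤ |(m 1 0 : ℝ)|)]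
  have hdet' : (m 0 0 : ℝ) * m 1 1 - m 0 1 * m 1 0 = 1 := by
    rw [det_fin_two] at hdet
    exact_mod_cast hdet
  have hzim : 1 < z.im ^ 2 := by nlinarith [sq_abs z.im, abs_nonneg z.im]
  set N := Complex.normSq (m 1 0 * z + m 1 1) with hN
  have hNge : z.im ^ 2 ≤ N := by
    rw [hN, Complex.normSq_apply]
    simp only [Complex.add_re, Complex.mul_re, Complex.intCast_re, Complex.intCast_im,
      Complex.add_im, Complex.mul_im]
    nlinarith [sq_nonneg ((m 1 0 : ℝ) * z.re + m 1 1), sq_nonneg z.im]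
  have hden : (m 1 0 : ℂ) * z + m 1 1 ≠ 0 := by
    rw [← Complex.normSq_pos, ← hN]
    linarith
  simp only [OnePoint.smul_some_eq_ite, GeneralLinearGroup.map_apply, eq_intCast, if_neg hden]
  rw [coe_mem_imRegion_true, Complex.div_im, div_sub_div_same, ← hN]
  have hnum : ((m 0 0 : ℂ) * z + m 0 1).im * ((m 1 0 : ℂ) * z + m 1 1).re -
      ((m 0 0 : ℂ) * z + m 0 1).re * ((m 1 0 : ℂ) * z + m 1 1).im = z.im := by
    simp only [Complex.add_re, Complex.mul_re, Complex.intCast_re, Complex.intCast_im,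
      Complex.add_im, Complex.mul_im]
    linear_combination z.im * hdet'
  rw [hnum, abs_div, abs_of_pos (a := N) (by linarith), div_lt_one (by linarith)]
  nlinarith [sq_abs z.im]

section PingPong

variable {ℓ : List (Bool × GL (Fin 2) ℂ)}

lemma list_prod_mapsTo_imRegion
    (hmaps : ∀ p ∈ ℓ, MapsTo (p.2 • ·) (imRegion (!p.1)) (imRegion p.1)) {j : Bool}
    (hchain : (ℓ.map Prod.fst ++ [j]).IsChain (· ≠ ·)) :
    MapsTo ((ℓ.map Prod.snd).prod • ·) (imRegion j) (imRegion ((ℓ.map Prod.fst).headD j)) :=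
  mapsTo_list_prod_smul imRegion ℓ (fun p hp _ hi => Bool.eq_not_iff.2 hi ▸ hmaps p hp) j hchain

lemma list_prod_not_isTranslation_of_headD_true
    (hmaps : ∀ p ∈ ℓ, MapsTo (p.2 • ·) (imRegion (!p.1)) (imRegion p.1))
    (hchain : (ℓ.map Prod.fst ++ [false]).IsChain (· ≠ ·))
    (hhead : (ℓ.map Prod.fst).headD false = true) (s : ℂ) :
    ¬ IsTranslation (ℓ.map Prod.snd).prod s := fun ht =>
  ht.not_mapsTo_imRegion_false (hhead ▸ list_prod_mapsTo_imRegion hmaps hchain)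

theorem list_prod_not_isTranslation
    (hmaps : ∀ p ∈ ℓ, MapsTo (p.2 • ·) (imRegion (!p.1)) (imRegion p.1))
    (htransl : ∀ p ∈ ℓ, p.1 = false → ∃ s, IsTranslation p.2 s) {j : Bool}
    (hchain : (ℓ.map Prod.fst ++ [j]).IsChain (· ≠ ·)) (hne : ℓ ≠ []) {r : ℂ} (hr : r.im = 0) :
    ¬ IsTranslation (ℓ.map Prod.snd).prod r := by
  intro ht
  have hpp := list_prod_mapsTo_imRegion hmaps hchain
  -- `j` is the index opposite to that of the last letter
  cases j <;> cases hhead : (ℓ.map Prod.fst).headD _ <;> rw [hhead] at hpp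
  · -- first letter of index `false`: absorb it into the translation
    obtain ⟨p, ℓ, rfl⟩ := List.exists_cons_of_ne_nil hne
    simp only [List.map_cons, List.headD_cons] at hhead
    obtain ⟨s, hs⟩ := htransl p (by simp) hhead
    simp only [List.map_cons, List.cons_append, List.isChain_cons] at hchain
    refine list_prod_not_isTranslation_of_headD_true (fun q hq => hmaps q (by simp [hq]))
      hchain.2 ?_ _ (by simpa using hs.inv.mul ht)
    cases ℓ <;> simp_all
  · exact ht.not_mapsTo_imRegion_false hpp
  · exact ht.not_mapsTo_imRegion_true hr hpp
  · -- last letter of index `false`: absorb it into the translation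
    obtain ⟨ℓ, p, rfl⟩ := (List.eq_nil_or_concat' ℓ).resolve_left hne
    simp only [List.map_append, List.map_cons, List.map_nil, List.append_assoc,
      List.cons_append, List.nil_append, List.isChain_append_cons_cons] at hchain
    have hp : p.1 = false := by simpa using hchain.2.1
    obtain ⟨s, hs⟩ := htransl p (by simp) hp
    refine list_prod_not_isTranslation_of_headD_true (fun q hq => hmaps q (by simp [hq]))
      (hp ▸ hchain.1) (by simpa [hp] using hhead) _ (by simpa using ht.mul hs.inv)

end PingPong

section ElementaryGroup

variable {R S : Type*} [CommRing R] [CommRing S]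

lemma det_eq_one_of_mem_E2 {u : GL (Fin 2) R} (hu : u ∈ E2 R) : u.val.det = 1 := by
  have hle : E2 R ≤ (GeneralLinearGroup.det : GL (Fin 2) R →* Rˣ).ker :=
    (Subgroup.closure_le _).2 (by rintro _ ⟨x, rfl⟩; ext; simp [Em, det_fin_two])
  simpa using congrArg Units.val (hle hu)

lemma mem_B2'_iff {u : GL (Fin 2) R} : u ∈ B2' R ↔ u ∈ E2 R ∧ u.val 1 0 = 0 := by
  refine ⟨fun h => ⟨h.1, h.2.1⟩, fun ⟨hE, h10⟩ => ⟨hE, h10, ?_⟩⟩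
  rw [coe_units_inv, inv_def, det_eq_one_of_mem_E2 hE]
  simp [adjugate_fin_two, h10]

lemma entries_of_mem_B2' {u : GL (Fin 2) R} (hu : u ∈ B2' R) :
    u.val 1 0 = 0 ∧ u.val 0 0 * u.val 1 1 = 1 := by
  have h10 := (mem_B2'_iff.1 hu).2
  have hdet := det_eq_one_of_mem_E2 hu.1
  rw [det_fin_two, h10, mul_zero, sub_zero] at hdet
  exact ⟨h10, hdet⟩

lemma map_Em (σ : R →+* S) (x : R) : GeneralLinearGroup.map σ (Em R x) = Em S (σ x) := by
  ext i j
  fin_cases i <;> fin_cases j <;> simp [Em]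

lemma map_mem_E2 (σ : R →+* S) {u : GL (Fin 2) R} (hu : u ∈ E2 R) :
    GeneralLinearGroup.map σ u ∈ E2 S := by
  have hle : E2 R ≤ (E2 S).comap (GeneralLinearGroup.map σ) :=
    (Subgroup.closure_le _).2 <| by
      rintro _ ⟨x, rfl⟩
      exact Subgroup.subset_closure ⟨σ x, (map_Em σ x).symm⟩
  exact hle hu

lemma map_mem_B2' (σ : R →+* S) {u : GL (Fin 2) R} (hu : u ∈ B2' R) :
    GeneralLinearGroup.map σ u ∈ B2' S :=
  mem_B2'_iff.2 ⟨map_mem_E2 σ hu.1, by simp [(entries_of_mem_B2' hu).1]⟩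

def mapE2 (σ : R →+* S) : E2 R →* E2 S :=
  ((GeneralLinearGroup.map σ).comp (E2 R).subtype).codRestrict _ fun u => map_mem_E2 σ u.2

def mapB2' (σ : R →+* S) : B2' R →* B2' S :=
  ((GeneralLinearGroup.map σ).comp (B2' R).subtype).codRestrict _ fun u => map_mem_B2' σ u.2

lemma mapB2'_injective {σ : R →+* S} (hσ : Function.Injective σ) :
    Function.Injective (mapB2' σ) := fun _ _ h =>
  Subtype.ext <| Units.ext <| Matrix.map_injective hσ (congrArg (fun w => w.val.val) h)

def upperUnipotent (t : R) : GL (Fin 2) R := Em R (-t) * (Em R 0)⁻¹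

lemma upperUnipotent_val (t : R) : (upperUnipotent t).val = !![1, t; 0, 1] := by
  ext i j
  fin_cases i <;> fin_cases j <;> simp [upperUnipotent, Em, Matrix.mul_apply]

lemma upperUnipotent_mem_B2' (t : R) : upperUnipotent t ∈ B2' R :=
  mem_B2'_iff.2 ⟨mul_mem (Subgroup.subset_closure ⟨-t, rfl⟩)
    (inv_mem (Subgroup.subset_closure ⟨0, rfl⟩)), by simp [upperUnipotent_val]⟩

lemma neg_one_mem_E2 : (-1 : GL (Fin 2) R) ∈ E2 R := by
  have h : Em R 0 * Em R 0 = -1 := by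
    ext i j
    fin_cases i <;> fin_cases j <;> simp [Em, Matrix.mul_apply]
  exact h ▸ mul_mem (Subgroup.subset_closure ⟨0, rfl⟩) (Subgroup.subset_closure ⟨0, rfl⟩)

lemma exists_mem_B2'_val_eq {ε : R} (hε : ε = 1 ∨ ε = -1) (t : R) :
    ∃ u ∈ B2' R, u.val = !![ε, t; 0, ε] := by
  rcases hε with rfl | rfl
  · exact ⟨_, upperUnipotent_mem_B2' t, upperUnipotent_val t⟩
  · refine ⟨-1 * upperUnipotent (-t), mem_B2'_iff.2 ⟨mul_mem neg_one_mem_E2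
      (upperUnipotent_mem_B2' _).1, ?_⟩, ?_⟩ <;>
    simp [upperUnipotent_val]

lemma mem_range_mapB2' (σ : R →+* S) {u : B2' S}
    {ε t : R} (hε : ε = 1 ∨ ε = -1) (hu : u.val.val = !![σ ε, σ t; 0, σ ε]) :
    u ∈ (mapB2' σ).range := by
  obtain ⟨v, hv, hval⟩ := exists_mem_B2'_val_eq hε t
  refine ⟨⟨v, hv⟩, Subtype.ext (Units.ext ?_)⟩
  rw [hu]
  ext i j
  fin_cases i <;> fin_cases j <;> simp [mapB2', hval]

end ElementaryGroup

namespace Zsqrtd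

lemma eq_one_or_neg_one_of_mul_eq_one {d : ℤ} (hd : d < -1) {a b : ℤ√d} (h : a * b = 1) :
    (a = 1 ∧ b = 1) ∨ (a = -1 ∧ b = -1) := by
  have hnorm : a.re * a.re - d * a.im * a.im = 1 := by
    rw [← norm_def, norm_eq_one_iff' (by omega)]
    exact .of_mul_eq_one b h
  have him : a.im = 0 := by
    by_contra him
    nlinarith [Int.one_le_abs him, sq_abs a.im, mul_self_nonneg a.re]
  rcases Int.eq_one_or_neg_one_of_mul_eq_one' (by simpa [him] using hnorm) with ⟨hre, -⟩ | ⟨hre, -⟩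
  · obtain rfl : a = 1 := by ext <;> simp [hre, him]
    exact Or.inl ⟨rfl, by simpa using h⟩
  · obtain rfl : a = -1 := by ext <;> simp [hre, him]
    exact Or.inr ⟨rfl, by simpa [neg_eq_iff_eq_neg] using h⟩

def toComplex {d : ℤ} (hd : 0 ≤ d) : ℤ√(-d) →+* ℂ :=
  lift ⟨(√(d : ℝ) : ℂ) * Complex.I, by
    have h : (√(d : ℝ) : ℂ) * √(d : ℝ) = d := by
      rw [← Complex.ofReal_mul, Real.mul_self_sqrt (by exact_mod_cast hd)]
      simp
    push_cast
    linear_combination (Complex.I * Complex.I) * h + d * Complex.I_mul_I⟩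

lemma toComplex_im {d : ℤ} (hd : 0 ≤ d) (z : ℤ√(-d)) :
    (toComplex hd z).im = z.im * √(d : ℝ) := by
  simp [toComplex, lift_apply_apply]

end Zsqrtd

section Amalgam

open Monoid

variable (S : Type) [CommRing S]

def amalgamFactor : ∀ b, boolFam (E2 ℤ) (B2' S) b →* E2 S
  | true => mapE2 (Int.castRingHom S)
  | false => Subgroup.inclusion inf_le_left

def amalgamLift : PushoutI (boolHoms inclB2' (mapB2' (Int.castRingHom S))) →* E2 S :=
  PushoutI.lift (amalgamFactor S) ((mapE2 (Int.castRingHom S)).comp inclB2') (by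
    rintro (_ | _) <;> rfl)

variable {S}

@[simp]
lemma amalgamLift_of_true (g : E2 ℤ) :
    amalgamLift S (PushoutI.of true g) = mapE2 (Int.castRingHom S) g :=
  PushoutI.lift_of _ _ _ _

@[simp]
lemma amalgamLift_of_false (g : B2' S) :
    amalgamLift S (PushoutI.of false g) = Subgroup.inclusion inf_le_left g :=
  PushoutI.lift_of _ _ _ _

@[simp]
lemma amalgamLift_base (h : B2' ℤ) :
    amalgamLift S (PushoutI.base _ h) = mapE2 (Int.castRingHom S) (inclB2' h) :=
  PushoutI.lift_base _ _ _ _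

variable (S)

theorem amalgamLift_surjective : Function.Surjective (amalgamLift S) := by
  have hgen : Subgroup.closure (((↑) : E2 S → GL (Fin 2) S) ⁻¹' Set.range (Em S)) = ⊤ :=
    Subgroup.closure_closure_coe_preimage
  rw [← MonoidHom.range_eq_top, eq_top_iff, ← hgen, Subgroup.closure_le]
  rintro ⟨_, hx⟩ ⟨x, rfl⟩
  refine ⟨PushoutI.of (φ := boolHoms inclB2' (mapB2' (Int.castRingHom S))) false
      ⟨upperUnipotent (-x), upperUnipotent_mem_B2' _⟩ *
    PushoutI.of true ⟨Em ℤ 0, Subgroup.subset_closure ⟨0, rfl⟩⟩, Subtype.ext ?_⟩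
  simp only [map_mul, amalgamLift_of_false, amalgamLift_of_true, Subgroup.coe_mul, mapE2,
    MonoidHom.codRestrict_apply, MonoidHom.coe_comp, Subgroup.coe_subtype, Function.comp_apply,
    map_Em, eq_intCast, Int.cast_zero, upperUnipotent, neg_neg]
  exact inv_mul_cancel_right _ _

end Amalgam

section ZsqrtdAmalgam

open Monoid

variable {d : ℤ}

def toGLComplex (hd : 0 ≤ d) : E2 (Zsqrtd (-d)) →* GL (Fin 2) ℂ :=
  (GeneralLinearGroup.map (Zsqrtd.toComplex hd)).comp (E2 _).subtype

lemma toGLComplex_mapE2 (hd : 0 ≤ d) (g : E2 ℤ) :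
    toGLComplex hd (mapE2 (Int.castRingHom _) g) =
      GeneralLinearGroup.map (Int.castRingHom ℂ) g := by
  show GeneralLinearGroup.map _ (GeneralLinearGroup.map _ g.val) = _
  rw [← MonoidHom.comp_apply, ← GeneralLinearGroup.map_comp,
    RingHom.ext_int ((Zsqrtd.toComplex hd).comp (Int.castRingHom _)) (Int.castRingHom ℂ)]

lemma exists_isTranslation_of_mem_B2'_int (h : B2' ℤ) :
    ∃ r : ℂ, r.im = 0 ∧ IsTranslation (GeneralLinearGroup.map (Int.castRingHom ℂ) h.val) r := by
  obtain ⟨h10, hdiag⟩ := entries_of_mem_B2' h.2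
  have h11 : h.val 1 1 = h.val 0 0 := by
    rcases Int.eq_one_or_neg_one_of_mul_eq_one' hdiag with ⟨h0, h1⟩ | ⟨h0, h1⟩ <;> rw [h0, h1]
  exact ⟨_, by simp, isTranslation_of_upperTriangular (by simp [h10]) (by simp [h11])⟩

lemma exists_isTranslation_of_not_mem_range (hd : 4 ≤ d) {g : B2' (Zsqrtd (-d))}
    (hg : g ∉ (mapB2' (Int.castRingHom (Zsqrtd (-d)))).range) :
    ∃ s : ℂ, 2 ≤ |s.im| ∧
      IsTranslation (GeneralLinearGroup.map (Zsqrtd.toComplex (by omega)) g.val) s := by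
  obtain ⟨h10, hdiag⟩ := entries_of_mem_B2' g.2
  obtain ⟨ε, hε, h00, h11⟩ : ∃ ε : ℤ, (ε = 1 ∨ ε = -1) ∧ g.val 0 0 = ε ∧ g.val 1 1 = ε := by
    rcases Zsqrtd.eq_one_or_neg_one_of_mul_eq_one (by omega) hdiag with ⟨h0, h1⟩ | ⟨h0, h1⟩
    exacts [⟨1, by simp [h0, h1]⟩, ⟨-1, by simp [h0, h1]⟩]
  have him : (g.val 0 1).im ≠ 0 := by
    intro him
    refine hg (mem_range_mapB2' _ hε (t := (g.val 0 1).re) ?_)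
    have ht : g.val 0 1 = ((g.val 0 1).re : Zsqrtd (-d)) := by ext <;> simp [him]
    rw [eta_fin_two g.val.val, h00, h10, h11, ht]
    rfl
  refine ⟨_, ?_, isTranslation_of_upperTriangular (by simp [h10]) (by simp [h00, h11])⟩
  have hsqrt : 2 ≤ √(d : ℝ) := by
    rw [show (2 : ℝ) = √4 by rw [show (4 : ℝ) = 2 ^ 2 by norm_num, Real.sqrt_sq (by norm_num)]]
    exact Real.sqrt_le_sqrt (by exact_mod_cast hd)
  have him' : (1 : ℝ) ≤ |((g.val 0 1).im : ℝ)| := by exact_mod_cast Int.one_le_abs him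
  have hshift : |(Zsqrtd.toComplex (by omega) (g.val 0 1) /
      Zsqrtd.toComplex (by omega) (g.val 1 1)).im| = |((g.val 0 1).im : ℝ)| * √(d : ℝ) := by
    rcases hε with rfl | rfl <;>
      simp [h11, Zsqrtd.toComplex_im, abs_mul, abs_of_nonneg (Real.sqrt_nonneg _), div_neg]
  simp only [GeneralLinearGroup.map_apply, hshift]
  nlinarith

lemma mapsTo_imRegion_of_not_mem_range (hd : 4 ≤ d) {i : Bool}
    {g : boolFam (E2 ℤ) (B2' (Zsqrtd (-d))) i}
    (hg : g ∉ (boolHoms inclB2' (mapB2' (Int.castRingHom (Zsqrtd (-d)))) i).range) :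
    MapsTo (toGLComplex (by omega) (amalgamLift _ (PushoutI.of i g)) • ·) (imRegion (!i))
        (imRegion i) ∧
      (i = false →
        ∃ s, IsTranslation (toGLComplex (by omega) (amalgamLift _ (PushoutI.of i g))) s) := by
  cases i with
  | true =>
    change E2 ℤ at g
    have hg' : toGLComplex (d := d) (by omega) (amalgamLift _ (PushoutI.of true g)) =
        GeneralLinearGroup.map (Int.castRingHom ℂ) g.val :=
      (congrArg _ (amalgamLift_of_true g)).trans (toGLComplex_mapE2 _ g)
    refine ⟨?_, by simp⟩
    rw [hg']
    exact mapsTo_imRegion_of_int g.val (det_eq_one_of_mem_E2 g.2)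
      fun h10 => hg ⟨⟨g, mem_B2'_iff.2 ⟨g.2, h10⟩⟩, rfl⟩
  | false =>
    obtain ⟨s, hs, ht⟩ := exists_isTranslation_of_not_mem_range hd hg
    exact ⟨ht.mapsTo_imRegion hs, fun _ => ⟨s, ht⟩⟩

lemma amalgamLift_base_mul_ne_one (hd : 4 ≤ d) (h : B2' ℤ) {w : CoprodI.Word _}
    (hw : PushoutI.Reduced (boolHoms inclB2' (mapB2' (Int.castRingHom (Zsqrtd (-d))))) w)
    (hne : w.toList ≠ []) :
    amalgamLift _ (PushoutI.base _ h * PushoutI.ofCoprodI w.prod) ≠ 1 := by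
  intro hx
  set ρ := toGLComplex (d := d) (by omega)
  set ℓ := w.toList.map fun l => (l.1, ρ (amalgamLift _ (PushoutI.of l.1 l.2)))
  obtain ⟨r, hr, hhead⟩ := exists_isTranslation_of_mem_B2'_int h
  have hprod : (ℓ.map Prod.snd).prod = (ρ (amalgamLift _ (PushoutI.base _ h)))⁻¹ := by
    refine eq_inv_of_mul_eq_one_right ?_
    simpa [ℓ, CoprodI.Word.prod, map_list_prod, List.map_map, Function.comp_def] using
      congrArg ρ hx
  have hchain : (ℓ.map Prod.fst).IsChain (· ≠ ·) := by
    simpa [ℓ, List.isChain_map] using w.chain_ne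
  refine list_prod_not_isTranslation (ℓ := ℓ) ?_ ?_ (j := !(ℓ.map Prod.fst).getLastD true)
    ?_ (by simpa [ℓ] using hne) (r := -r) (by simp [hr]) ?_
  · simp only [ℓ, List.mem_map]
    rintro _ ⟨l, hl, rfl⟩
    exact (mapsTo_imRegion_of_not_mem_range hd (hw l hl)).1
  · simp only [ℓ, List.mem_map]
    rintro _ ⟨l, hl, rfl⟩
    exact (mapsTo_imRegion_of_not_mem_range hd (hw l hl)).2
  · refine List.isChain_append.2 ⟨hchain, List.isChain_singleton _, ?_⟩
    intro x hx y hy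
    simp only [List.head?_cons, Option.mem_def, Option.some.injEq] at hx hy
    simp [← hy, List.getLastD_eq_getLast?, hx]
  · rw [hprod, amalgamLift_base, toGLComplex_mapE2]
    exact hhead.inv

theorem amalgamLift_injective (hd : 4 ≤ d) : Function.Injective (amalgamLift (Zsqrtd (-d))) := by
  have hφ : ∀ i, Function.Injective (boolHoms inclB2' (mapB2' (Int.castRingHom (Zsqrtd (-d)))) i)
    | true => Subgroup.inclusion_injective (inf_le_left : B2' ℤ ≤ E2 ℤ)
    | false => mapB2'_injective Int.cast_injective
  rw [injective_iff_map_eq_one]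
  intro x hx
  obtain ⟨h, w, hw, rfl⟩ := PushoutI.exists_reduced_eq_base_mul hφ x
  by_cases hnil : w.toList = []
  · have hw1 : w.prod = 1 := by simp [CoprodI.Word.prod, hnil]
    rw [hw1, map_one, mul_one, amalgamLift_base] at hx
    have hval := congrArg (fun u => u.val.val) hx
    have hh : mapB2' (Int.castRingHom (Zsqrtd (-d))) h = 1 := Subtype.ext (Units.ext hval)
    rw [hφ false (hh.trans (map_one _).symm), hw1, map_one, map_one, mul_one]
  · exact absurd hx (amalgamLift_base_mul_ne_one hd h hw hnil)

end ZsqrtdAmalgam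

lemma inclB2'_not_surjective : ¬ Function.Surjective inclB2' := by
  intro hs
  obtain ⟨c, hc⟩ := hs ⟨Em ℤ 0, Subgroup.subset_closure ⟨0, rfl⟩⟩
  have h10 := (entries_of_mem_B2' c.2).1
  rw [show c.val = Em ℤ 0 from congrArg Subtype.val hc] at h10
  simp [Em] at h10

lemma mapB2'_intCast_not_surjective (d : ℤ) :
    ¬ Function.Surjective (mapB2' (Int.castRingHom (Zsqrtd d))) := by
  intro hs
  obtain ⟨c, hc⟩ := hs ⟨upperUnipotent Zsqrtd.sqrtd, upperUnipotent_mem_B2' _⟩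
  have h := congrArg (fun u => (u.val.val 0 1).im) hc
  simp [mapB2', upperUnipotent_val] at h

/-- For an integer `d ≥ 4` and `𝒪 = ℤ[√-d]`, one has
`E₂(𝒪) ≅ E₂(ℤ) ∗_{B₂'(ℤ)} B₂'(𝒪)` – a nontrivial amalgamated product – where the two maps
from `B₂'(ℤ)` are the natural inclusions (the one into `B₂'(𝒪)` being induced by the
coefficient ring embedding `ℤ → 𝒪`). -/
theorem E2_Zsqrtd_amalgam (d : ℤ) (hd : 4 ≤ d) :
    ∃ g : ↥(B2' ℤ) →* ↥(B2' (Zsqrtd (-d))),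
      (∀ u : ↥(B2' ℤ), (g u).val.val =
        (Int.castRingHom (Zsqrtd (-d))).mapMatrix u.val.val) ∧
      Function.Injective inclB2' ∧ Function.Injective g ∧
      ¬ Function.Surjective inclB2' ∧ ¬ Function.Surjective g ∧
      Nonempty (↥(E2 (Zsqrtd (-d))) ≃* Monoid.PushoutI (boolHoms inclB2' g)) :=
  ⟨mapB2' (Int.castRingHom _), fun _ => rfl, Subgroup.inclusion_injective _,
    mapB2'_injective Int.cast_injective, inclB2'_not_surjective,
    mapB2'_intCast_not_surjective _,
    ⟨(MulEquiv.ofBijective _ ⟨amalgamLift_injective hd, amalgamLift_surjective _⟩).symm⟩⟩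
end
end

section
/- The group E₂(Γ₂(ℤ)) is isomorphic to SL₂(ℤ[i]), the group of 2×2 matrices of determinant 1 over the Gaussian integers. -/
/-! The generator `i₁` of `C₂(ℤ)` squares to `-1`, so `C₂(ℤ) ≅ ℤ[i]` with `i₁ ↦ i`, and
`V²(ℤ) = C₂(ℤ)`. Under this isomorphism `E₂(Γ₂(ℤ))` becomes the subgroup of `SL₂(ℤ[i])` generated
by the `E(z)`, which is all of `SL₂(ℤ[i])` because `ℤ[i]` is Euclidean: for `M = !![a, b; c, d]`
and `q = a / c`, the lower-left entry of `E(-q)⁻¹ M` is `a % c`, so the Euclidean algorithm reaches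
`c = 0`, and then `M = E(-a(b+1)) E(-d) E(-a)`. -/

noncomputable section

open CliffordAlgebra

section ElementarySL2

variable {R : Type*}

def elemSL2 [CommRing R] (x : R) : Matrix.SpecialLinearGroup (Fin 2) R :=
  ⟨!![x, 1; -1, 0], by simp [Matrix.det_fin_two_of]⟩

@[simp]
theorem coe_elemSL2 [CommRing R] (x : R) :
    (elemSL2 x : Matrix (Fin 2) (Fin 2) R) = !![x, 1; -1, 0] :=
  rfl

theorem elemSL2_inv_mul_apply_one_zero [CommRing R] (x : R)
    (M : Matrix.SpecialLinearGroup (Fin 2) R) :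
    ((elemSL2 x)⁻¹ * M) 1 0 = M 0 0 + x * M 1 0 := by
  simp [Matrix.SpecialLinearGroup.coe_inv, Matrix.adjugate_fin_two_of, Matrix.mul_apply]

theorem eq_elemSL2_mul_of_apply_one_zero_eq_zero [CommRing R]
    {M : Matrix.SpecialLinearGroup (Fin 2) R} (hM : M 1 0 = 0) :
    M = elemSL2 (-(M 0 0 * (M 0 1 + 1))) * elemSL2 (-M 1 1) * elemSL2 (-M 0 0) := by
  have hdet : M 0 0 * M 1 1 = 1 := by
    have h := M.det_coe
    rwa [Matrix.det_fin_two, hM, mul_zero, sub_zero] at h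
  ext i j
  fin_cases i <;> fin_cases j <;> simp [Matrix.mul_apply, hM] <;> grind

theorem closure_range_elemSL2 [EuclideanDomain R] :
    Subgroup.closure (Set.range (elemSL2 (R := R))) = ⊤ := by
  suffices ∀ c : R, ∀ M : Matrix.SpecialLinearGroup (Fin 2) R, M 1 0 = c →
      M ∈ Subgroup.closure (Set.range elemSL2) from
    eq_top_iff.2 fun M _ => this _ M rfl
  intro c
  induction c using (EuclideanDomain.r_wellFounded (R := R)).induction with | h c ih => ?_
  rintro M rfl
  by_cases hc : M 1 0 = 0
  · rw [eq_elemSL2_mul_of_apply_one_zero_eq_zero hc]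
    exact mul_mem (mul_mem (Subgroup.subset_closure ⟨_, rfl⟩) (Subgroup.subset_closure ⟨_, rfl⟩))
      (Subgroup.subset_closure ⟨_, rfl⟩)
  · set q := M 0 0 / M 1 0
    have hrem : ((elemSL2 (-q))⁻¹ * M) 1 0 = M 0 0 % M 1 0 := by
      rw [elemSL2_inv_mul_apply_one_zero]
      linear_combination -EuclideanDomain.mod_add_div (M 0 0) (M 1 0)
    rw [← mul_inv_cancel_left (elemSL2 (-q)) M]
    exact mul_mem (Subgroup.subset_closure ⟨_, rfl⟩)
      (ih _ (hrem ▸ EuclideanDomain.mod_lt (M 0 0) hc) _ hrem)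

end ElementarySL2

theorem ι_two_eq_zsmul_iGen (v : Fin (2 - 1) → ℤ) : ι (Qf 2) v = v 0 • iGen 2 0 := by
  rw [iGen, ← map_zsmul]
  congr
  ext j
  fin_cases j
  simp

def clTwoToGaussianInt : Cl 2 →ₐ[ℤ] GaussianInt :=
  lift (Qf 2) ⟨(LinearMap.proj 0).smulRight Zsqrtd.sqrtd, fun v => by
    ext <;> simp [Qf, Zsqrtd.re_mul, Zsqrtd.im_mul]⟩

theorem clTwoToGaussianInt_iGen : clTwoToGaussianInt (iGen 2 0) = Zsqrtd.sqrtd := by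
  simp [clTwoToGaussianInt, iGen]

def gaussianIntToClTwo : GaussianInt →ₐ[ℤ] Cl 2 where
  toFun z := z.re • 1 + z.im • iGen 2 0
  map_one' := by simp
  map_zero' := by simp
  map_add' z w := by simp only [Zsqrtd.re_add, Zsqrtd.im_add]; module
  map_mul' z w := by
    simp only [Zsqrtd.re_mul, Zsqrtd.im_mul, add_mul, mul_add, smul_mul_smul_comm, one_mul,
      mul_one, iGen_sq]
    module
  commutes' n := by simp

@[simp]
theorem gaussianIntToClTwo_sqrtd : gaussianIntToClTwo Zsqrtd.sqrtd = iGen 2 0 := by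
  simp [gaussianIntToClTwo]

def clTwoEquivGaussianInt : Cl 2 ≃ₐ[ℤ] GaussianInt :=
  AlgEquiv.ofAlgHom clTwoToGaussianInt gaussianIntToClTwo
    (AlgHom.ext <| RingHom.congr_fun <| Zsqrtd.hom_ext
      (clTwoToGaussianInt.comp gaussianIntToClTwo).toRingHom (RingHom.id _)
      (by simp [clTwoToGaussianInt_iGen]))
    (CliffordAlgebra.hom_ext <| LinearMap.ext fun v => by
      simp only [LinearMap.comp_apply, AlgHom.toLinearMap_apply, AlgHom.id_apply]
      rw [ι_two_eq_zsmul_iGen, map_zsmul, AlgHom.comp_apply, clTwoToGaussianInt_iGen,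
        gaussianIntToClTwo_sqrtd])

theorem Vn_two_eq_top : Vn 2 = ⊤ := by
  refine eq_top_iff.2 fun x _ => ?_
  rw [← clTwoEquivGaussianInt.symm_apply_apply x]
  exact add_mem (Submodule.smul_mem _ _ (Submodule.subset_span (Set.mem_insert _ _)))
    (Submodule.smul_mem _ _
      (Submodule.subset_span (Set.mem_insert_of_mem _ (Set.mem_range_self 0))))

def slToClTwoUnits :
    Matrix.SpecialLinearGroup (Fin 2) GaussianInt →* (Matrix (Fin 2) (Fin 2) (Cl 2))ˣ :=
  (Units.map (clTwoEquivGaussianInt.symm.mapMatrix (m := Fin 2) :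
    Matrix (Fin 2) (Fin 2) GaussianInt →* Matrix (Fin 2) (Fin 2) (Cl 2))).comp
    Matrix.SpecialLinearGroup.toGL

theorem slToClTwoUnits_injective : Function.Injective slToClTwoUnits :=
  (Units.map_injective clTwoEquivGaussianInt.symm.mapMatrix.injective).comp
    Matrix.SpecialLinearGroup.toGL_injective

theorem slToClTwoUnits_elemSL2 (z : GaussianInt) :
    slToClTwoUnits (elemSL2 z) = Eu 2 (clTwoEquivGaussianInt.symm z) := by
  ext i j
  fin_cases i <;> fin_cases j <;> simp [slToClTwoUnits, Eu, Matrix.SpecialLinearGroup.toGL]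

theorem range_slToClTwoUnits : slToClTwoUnits.range = E2Gamma 2 := by
  rw [MonoidHom.range_eq_map, ← closure_range_elemSL2, MonoidHom.map_closure, E2Gamma,
    Vn_two_eq_top, ← Set.range_comp,
    show slToClTwoUnits ∘ elemSL2 = Eu 2 ∘ clTwoEquivGaussianInt.symm from
      funext slToClTwoUnits_elemSL2,
    clTwoEquivGaussianInt.symm.surjective.range_comp]
  congr 1
  ext u
  simp [eq_comm]

/-- `E₂(Γ₂(ℤ))` is isomorphic to `SL₂(ℤ[i])`. -/
theorem E2Gamma_two_iso_SL2_gaussianInt :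
    Nonempty (↥(E2Gamma 2) ≃* Matrix.SpecialLinearGroup (Fin 2) GaussianInt) :=
  ⟨((MonoidHom.ofInjective slToClTwoUnits_injective).trans
    (MulEquiv.subgroupCongr range_slToClTwoUnits)).symm⟩
end
end
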